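/- arXiv:math/0602481 — 11 statements merged into one kernel-verified Lean document; each statement's English description precedes it below -/
import Mathlib

section
/- The combinatorial R on B_l ⊗ B_k commutes with the Dynkin diagram involution: (ω ⊗ ω) ∘ R = R ∘ (ω ⊗ ω), where ω:(x₁,x₂)↦(x₂,x₁). -/
/-- Membership in the crystal `B_l`: pairs of nonnegative integers summing to `l`. -/
def memB (l : ℤ) (x : ℤ × ℤ) : Prop := 0 ≤ x.1 ∧ 0 ≤ x.2 ∧ x.1 + x.2 = l

/-- `Q₁(x,y) = min(x₂, y₁)`. -/
def Q1 (x y : ℤ × ℤ) : ℤ := min x.2 y.1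

/-- `Q₀(x,y) = Q₂(x,y) = min(x₁, y₂)` (indices mod 2). -/
def Q0 (x y : ℤ × ℤ) : ℤ := min x.1 y.2

/-- The combinatorial `R`: `x ⊗ y ↦ ỹ ⊗ x̃` with
`x̃ᵢ = xᵢ + Qᵢ - Qᵢ₋₁`, `ỹᵢ = yᵢ + Qᵢ₋₁ - Qᵢ`. -/
def Rmap (x y : ℤ × ℤ) : (ℤ × ℤ) × (ℤ × ℤ) :=
  ((y.1 + Q0 x y - Q1 x y, y.2 + Q1 x y - Q0 x y),
   (x.1 + Q1 x y - Q0 x y, x.2 + Q0 x y - Q1 x y))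

/-- The Dynkin diagram involution `ω : (x₁,x₂) ↦ (x₂,x₁)`. -/
def omegaB (x : ℤ × ℤ) : ℤ × ℤ := (x.2, x.1)

/-- The combinatorial `R` on `B_l ⊗ B_k` commutes with the Dynkin diagram
involution: `(ω ⊗ ω) ∘ R = R ∘ (ω ⊗ ω)`. -/
theorem stmt1 (l k : ℤ) (x y : ℤ × ℤ) (hx : memB l x) (hy : memB k y) :
    Rmap (omegaB x) (omegaB y) = (omegaB (Rmap x y).1, omegaB (Rmap x y).2) := by
  simp [Rmap, Q0, Q1, omegaB, Prod.ext_iff]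
end

section
/- Let L ≥ 1 and let p = b₁⊗⋯⊗b_L ∈ B₁^{⊗L} be a path with at least as many letters 1 as letters 2 (i.e. wt(p) ≥ 0). Then there exist d ∈ ℤ and a highest path p₊ (one satisfying: in every prefix of p₊, the number of 1's is at least the number of 2's) such that p equals the d-fold cyclic shift of p₊. -/
/-- A path `q : ZMod L → Bool` (with `true` the letter 1 and `false` the letter 2)
is highest if in every prefix the number of 1's is at least the number of 2's. -/
def IsHighest (L : ℕ) (q : ZMod L → Bool) : Prop :=
  ∀ k ≤ L, ((Finset.range k).filter (fun i : ℕ => q (i : ZMod L) = false)).card ≤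
    ((Finset.range k).filter (fun i : ℕ => q (i : ZMod L) = true)).card

/-- Partial sums vs. filter cards, for any Bool sequence. -/
lemma sum_eq_card_sub_card (b : ℕ → Bool) (k : ℕ) :
    (∑ i ∈ Finset.range k, (if b i then (1 : ℤ) else -1)) =
      ((Finset.range k).filter (fun i => b i = true)).card -
      ((Finset.range k).filter (fun i => b i = false)).card := by
  induction k with
  | zero => simp
  | succ k ih =>
    rw [Finset.sum_range_succ, ih]
    rcases Bool.eq_false_or_eq_true (b k) with hb | hb <;>
      · simp only [Finset.range_add_one, Finset.filter_insert, hb,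
          if_true, if_false, Bool.true_eq_false, Bool.false_eq_true]
        rw [Finset.card_insert_of_notMem (by simp)]
        push_cast
        ring

/-- Any path with at least as many 1's as 2's (i.e. `wt(p) ≥ 0`) is a cyclic
shift `T₁^d` of a highest path: `p_i = (p₊)_{i-d}`. -/
theorem stmt4 (L : ℕ) (hL : 1 ≤ L) (p : ZMod L → Bool)
    (hwt : ((Finset.range L).filter (fun i : ℕ => p (i : ZMod L) = false)).card ≤
      ((Finset.range L).filter (fun i : ℕ => p (i : ZMod L) = true)).card) :
    ∃ (d : ℤ) (q : ZMod L → Bool), IsHighest L q ∧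
      ∀ i : ZMod L, p i = q (i - (d : ZMod L)) := by
  set a : ℕ → Bool := fun n => p (n : ZMod L) with ha
  set S : ℕ → ℤ := fun k => ∑ i ∈ Finset.range k, (if a i then (1 : ℤ) else -1) with hS
  have hper : ∀ n, a (n + L) = a n := by
    intro n
    simp only [ha]
    congr 1
    push_cast [ZMod.natCast_self]
    ring
  have hScard : ∀ k, S k =
      ((Finset.range k).filter (fun i => a i = true)).card -
      ((Finset.range k).filter (fun i => a i = false)).card :=
    fun k => sum_eq_card_sub_card a k
  have hSL : 0 ≤ S L := by
    have := hScard L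
    rw [this]
    have hwt' : ((Finset.range L).filter (fun i => a i = false)).card ≤
        ((Finset.range L).filter (fun i => a i = true)).card := hwt
    omega
  have hSadd : ∀ j, S (j + L) = S j + S L := by
    intro j
    induction j with
    | zero => simp [hS]
    | succ j ih =>
      have e : j + 1 + L = (j + L) + 1 := by omega
      have h1 : S (j + 1 + L) = S (j + L) + (if a (j + L) then (1 : ℤ) else -1) := by
        rw [e]; exact Finset.sum_range_succ _ _
      have h2 : S (j + 1) = S j + (if a j then (1 : ℤ) else -1) :=
        Finset.sum_range_succ _ _
      rw [h1, h2, ih, hper j]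
      ring
  obtain ⟨m, hmL, hmin⟩ := Finset.exists_min_image (Finset.range L) S
    ⟨0, Finset.mem_range.mpr hL⟩
  have hmL' : m < L := Finset.mem_range.mp hmL
  have hglob : ∀ k, S m ≤ S k := by
    intro k
    induction k using Nat.strong_induction_on with
    | _ k ih =>
      rcases lt_or_ge k L with h | h
      · exact hmin k (Finset.mem_range.mpr h)
      · have hk : k = (k - L) + L := by omega
        have h1 : S k = S (k - L) + S L := by
          have := hSadd (k - L); rw [← hk] at this; exact this
        have h2 := ih (k - L) (by omega)
        omega
  refine ⟨(m : ℤ), fun x => p (x + (m : ZMod L)), ?_, ?_⟩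
  · -- IsHighest
    intro k hk
    set b : ℕ → Bool := fun n => a (m + n) with hb
    have hqb : ∀ n : ℕ, p ((n : ZMod L) + (m : ZMod L)) = b n := by
      intro n
      simp only [hb, ha]
      congr 1
      push_cast
      ring
    have hshift : ∀ j, (∑ i ∈ Finset.range j, (if b i then (1 : ℤ) else -1))
        = S (m + j) - S m := by
      intro j
      induction j with
      | zero => simp
      | succ j ih =>
        rw [Finset.sum_range_succ, ih]
        have : m + (j + 1) = (m + j) + 1 := by omega
        rw [this]
        simp only [hS]
        rw [Finset.sum_range_succ (n := m + j)]
        simp only [hb]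
        ring
    have hkey := sum_eq_card_sub_card b k
    rw [hshift k] at hkey
    have hge : 0 ≤ S (m + k) - S m := by
      have := hglob (m + k); omega
    have hfilt1 : (Finset.range k).filter (fun i : ℕ =>
          (fun x => p (x + (m : ZMod L))) ((i : ℕ) : ZMod L) = false)
        = (Finset.range k).filter (fun i => b i = false) := by
      apply Finset.filter_congr
      intro i _
      simp only [hqb i]
    have hfilt2 : (Finset.range k).filter (fun i : ℕ =>
          (fun x => p (x + (m : ZMod L))) ((i : ℕ) : ZMod L) = true)
        = (Finset.range k).filter (fun i => b i = true) := by
      apply Finset.filter_congr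
      intro i _
      simp only [hqb i]
    rw [hfilt1, hfilt2]
    omega
  · intro i
    have : ((m : ℤ) : ZMod L) = (m : ZMod L) := by push_cast; ring
    rw [this]
    simp
end

section
/- Fix m ∈ M with support H = {j₁ < ⋯ < j_s}, vacancy numbers p_j = L - 2Σ_k min(j,k)m_k. For J ∈ J̄(m) = J_{j₁} × ⋯ × J_{j_s}, where J_j = {(J_i)_{i∈ℤ} : J_i ∈ ℤ, J_i ≤ J_{i+1}, J_{i+m_j} = J_i + p_j}, the composite slide σ_{j₁}^{m_{j₁}} ∘ ⋯ ∘ σ_{j_s}^{m_{j_s}} applied to J equals J + L (i.e. every entry is increased by L). -/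
/-!
Each slide `σ_k` shifts the index of block `k` by one and adds the constant `2 min(j,k)` to
block `j`. The composite therefore shifts block `j` by `m_j` and adds `2 Σ_k min(j,k) m_k`;
quasi-periodicity turns the shift into the addition of `p_j`, and
`p_j + 2 Σ_k min(j,k) m_k = L`.
-/

/-- The vacancy number `p_j = L - 2 Σ_k min(j,k) m_k`. -/
def vacancy (L : ℕ) (m : ℕ →₀ ℕ) (j : ℕ) : ℤ :=
  (L : ℤ) - 2 * ∑ k ∈ m.support, (min j k : ℤ) * (m k : ℤ)

/-- `J ∈ J̄(m)`: on each block `j ∈ H = supp(m)`, the sequence `(J_i)_{i∈ℤ}` is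
weakly increasing and quasi-periodic: `J_{i+m_j} = J_i + p_j`. -/
def InJbar (L : ℕ) (m : ℕ →₀ ℕ) (J : ℕ → ℤ → ℤ) : Prop :=
  ∀ j ∈ m.support, (∀ i : ℤ, J j i ≤ J j (i + 1)) ∧
    ∀ i : ℤ, J j (i + (m j : ℤ)) = J j i + vacancy L m j

/-- The slide `σ_k`: `(σ_k J)^{(j)}_i = J^{(j)}_{i+δ_{j,k}} + 2 min(j,k)`. -/
def slide (k : ℕ) (J : ℕ → ℤ → ℤ) : ℕ → ℤ → ℤ :=
  fun j i => J j (i + (if j = k then 1 else 0)) + 2 * (min j k : ℤ)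

lemma slide_iterate_apply (k n : ℕ) (J : ℕ → ℤ → ℤ) (j : ℕ) (i : ℤ) :
    (slide k)^[n] J j i
      = J j (i + n * (if j = k then 1 else 0)) + 2 * n * (min j k : ℤ) := by
  induction n generalizing i with
  | zero => simp
  | succ n ih =>
    rw [Function.iterate_succ_apply', slide, ih]
    push_cast
    ring_nf

lemma foldr_slide_iterate_apply (n : ℕ → ℕ) (l : List ℕ) (J : ℕ → ℤ → ℤ) (j : ℕ) (i : ℤ) :
    (l.foldr (fun k F => (slide k)^[n k] ∘ F) id) J j i
      = J j (i + l.count j * n j) + 2 * (l.map fun k : ℕ => (min j k : ℤ) * n k).sum := by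
  induction l generalizing i with
  | nil => simp
  | cons k t ih =>
    simp only [List.foldr_cons, Function.comp_apply, slide_iterate_apply, ih, List.map_cons,
      List.sum_cons, List.count_cons, beq_iff_eq]
    by_cases h : j = k
    · subst h
      simp only [if_true]
      push_cast
      ring_nf
    · simp only [h, Ne.symm h, if_false, add_zero]
      ring_nf

lemma foldr_sort_slide_iterate_apply (n : ℕ → ℕ) (s : Finset ℕ) (J : ℕ → ℤ → ℤ) {j : ℕ}
    (hj : j ∈ s) (i : ℤ) :
    ((s.sort (· ≤ ·)).foldr (fun k F => (slide k)^[n k] ∘ F) id) J j i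
      = J j (i + n j) + 2 * ∑ k ∈ s, (min j k : ℤ) * n k := by
  have hcount : (s.sort (· ≤ ·)).count j = 1 :=
    List.count_eq_one_of_mem (s.sort_nodup _) (by simpa using hj)
  have hsum : ((s.sort (· ≤ ·)).map fun k : ℕ => (min j k : ℤ) * n k).sum
      = ∑ k ∈ s, (min j k : ℤ) * n k := by
    rw [← Finset.sum_map_toList]
    exact ((s.sort_perm_toList _).map _).sum_eq
  rw [foldr_slide_iterate_apply, hcount, hsum, Nat.cast_one, one_mul]

theorem stmt6_general (L : ℕ) (m : ℕ →₀ ℕ)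
    (J : ℕ → ℤ → ℤ) (hJ : InJbar L m J) :
    ∀ j ∈ m.support, ∀ i : ℤ,
      (((m.support.sort (· ≤ ·)).foldr (fun k F => (slide k)^[m k] ∘ F) id) J) j i
        = J j i + L := by
  intro j hj i
  rw [foldr_sort_slide_iterate_apply m m.support J hj, (hJ j hj).2 i, vacancy]
  ring

/-- The composite slide `σ_{j₁}^{m_{j₁}} ∘ ⋯ ∘ σ_{j_s}^{m_{j_s}}` applied to
`J ∈ J̄(m)` equals `J + L` (every entry increased by `L`). -/
theorem stmt6 (L : ℕ) (hL : 0 < L) (m : ℕ →₀ ℕ) (h0 : m 0 = 0)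
    (hm : 2 * ∑ j ∈ m.support, j * m j ≤ L)
    (J : ℕ → ℤ → ℤ) (hJ : InJbar L m J) :
    ∀ j ∈ m.support, ∀ i : ℤ,
      (((m.support.sort (· ≤ ·)).foldr (fun k F => (slide k)^[m k] ∘ F) id) J) j i
        = J j i + L :=
  stmt6_general L m J hJ
end

section
/- Fix m ∈ M with support H = {j₁<⋯<j_s} and vacancy numbers p_j. The slides σ_k: J̄(m) → J̄(m) are bijections and pairwise commute: σ_k ∘ σ_l = σ_l ∘ σ_k for all k, l ≥ 1. -/
def blockShift (s c : ℕ → ℤ) (J : ℕ → ℤ → ℤ) : ℕ → ℤ → ℤ :=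
  fun j i => J j (i + s j) + c j

theorem slide_eq_blockShift (k : ℕ) :
    slide k = blockShift (fun j => if j = k then 1 else 0) (fun j => 2 * (min j k : ℤ)) :=
  rfl

theorem blockShift_blockShift (s c s' c' : ℕ → ℤ) (J : ℕ → ℤ → ℤ) :
    blockShift s c (blockShift s' c' J) = blockShift (s + s') (c + c') J := by
  funext j i
  simp only [blockShift, Pi.add_apply]
  rw [add_assoc i, add_assoc, add_comm (c' j)]

theorem blockShift_zero (J : ℕ → ℤ → ℤ) : blockShift 0 0 J = J := by
  funext j i
  simp [blockShift]

theorem blockShift_comm (s c s' c' : ℕ → ℤ) :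
    blockShift s c ∘ blockShift s' c' = blockShift s' c' ∘ blockShift s c := by
  funext J
  simp only [Function.comp_apply, blockShift_blockShift, add_comm s, add_comm c]

def blockShiftEquiv (s c : ℕ → ℤ) : (ℕ → ℤ → ℤ) ≃ (ℕ → ℤ → ℤ) where
  toFun := blockShift s c
  invFun := blockShift (-s) (-c)
  left_inv J := by simp only [blockShift_blockShift, neg_add_cancel, blockShift_zero]
  right_inv J := by simp only [blockShift_blockShift, add_neg_cancel, blockShift_zero]

theorem InJbar.blockShift {L : ℕ} {m : ℕ →₀ ℕ} {J : ℕ → ℤ → ℤ} (hJ : InJbar L m J)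
    (s c : ℕ → ℤ) : InJbar L m (blockShift s c J) := by
  intro j hj
  obtain ⟨hmono, hperiod⟩ := hJ j hj
  refine ⟨fun i => ?_, fun i => ?_⟩
  · simpa only [_root_.blockShift, add_right_comm i 1] using add_le_add_left (hmono (i + s j)) _
  · simp only [_root_.blockShift, add_right_comm i (m j : ℤ), hperiod]
    ring

theorem bijOn_blockShift_inJbar (L : ℕ) (m : ℕ →₀ ℕ) (s c : ℕ → ℤ) :
    Set.BijOn (blockShift s c) {J | InJbar L m J} {J | InJbar L m J} :=
  (blockShiftEquiv s c).bijOn' (fun _ hJ => hJ.blockShift s c) (fun _ hJ => hJ.blockShift _ _)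

theorem stmt7_general (L : ℕ) (m : ℕ →₀ ℕ) :
    (∀ k, 1 ≤ k → Set.BijOn (slide k) {J | InJbar L m J} {J | InJbar L m J}) ∧
    (∀ k l, 1 ≤ k → 1 ≤ l → slide k ∘ slide l = slide l ∘ slide k) := by
  refine ⟨fun k _ => ?_, fun k l _ _ => ?_⟩
  · rw [slide_eq_blockShift]
    exact bijOn_blockShift_inJbar L m _ _
  · rw [slide_eq_blockShift, slide_eq_blockShift]
    exact blockShift_comm _ _ _ _

/-- The slides `σ_k : J̄(m) → J̄(m)` are bijections and pairwise commute. -/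
theorem stmt7 (L : ℕ) (hL : 0 < L) (m : ℕ →₀ ℕ) (h0 : m 0 = 0)
    (hm : 2 * ∑ j ∈ m.support, j * m j ≤ L) :
    (∀ k, 1 ≤ k → Set.BijOn (slide k) {J | InJbar L m J} {J | InJbar L m J}) ∧
    (∀ k l, 1 ≤ k → 1 ≤ l → slide k ∘ slide l = slide l ∘ slide k) :=
  stmt7_general L m
end

section
/- Let H = {j₁ < ⋯ < j_s} be a finite set of positive integers, (m_j)_{j∈H} positive integers, p_j = L - 2Σ_{k∈H} min(j,k)m_k, and F the s×s matrix F_{j,k} = δ_{j,k}p_j + 2·min(j,k)m_k (j,k ∈ H). Then det F = L · p_{j₁} · p_{j₂} ⋯ p_{j_{s-1}}. -/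
/-!
Write `F = diag(p) + (g (min a b) * w b)` with `g a = j a` and `w b = 2 m b`; every row of `F`
sums to `L`. Adding the last column to the second-to-last one and then subtracting the
second-to-last row from the last one turns the last row into `p_{s-1} e_s`. The remaining
top-left block has the same shape, one size smaller: the last two weights are merged and the
diagonal entries `p_1, …, p_{s-1}` do not change. Induction ends at the `1 × 1` matrix `(L)`.
-/

open Finset Matrix

variable {R : Type*} [CommRing R]

theorem Matrix.det_eq_mul_det_submatrix_castSucc_of_row_last {n : ℕ}
    (A : Matrix (Fin (n + 1)) (Fin (n + 1)) R) (c : R)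
    (hA : A (Fin.last n) = Pi.single (Fin.last n) c) :
    A.det = c * (A.submatrix Fin.castSucc Fin.castSucc).det := by
  rw [det_succ_row A (Fin.last n), Finset.sum_eq_single (Fin.last n)]
  · simp [hA, ← two_mul]
  · intro b _ hb
    simp [hA, hb]
  · simp

theorem Fin.castSucc_min {n : ℕ} (a b : Fin n) :
    (min a b).castSucc = min a.castSucc b.castSucc :=
  Fin.strictMono_castSucc.monotone.map_min

def Matrix.reduceLastPair {n : ℕ} (A : Matrix (Fin (n + 2)) (Fin (n + 2)) R) :
    Matrix (Fin (n + 2)) (Fin (n + 2)) R :=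
  let G := A.updateCol (Fin.last n).castSucc
    fun k => A k (Fin.last n).castSucc + A k (Fin.last (n + 1))
  G.updateRow (Fin.last (n + 1)) (G (Fin.last (n + 1)) - G (Fin.last n).castSucc)

theorem Matrix.det_reduceLastPair {n : ℕ} (A : Matrix (Fin (n + 2)) (Fin (n + 2)) R) :
    A.reduceLastPair.det = A.det := by
  have hil : (Fin.last n).castSucc ≠ Fin.last (n + 1) := Fin.castSucc_ne_last _
  rw [reduceLastPair, sub_eq_add_neg, ← neg_one_smul R, det_updateRow_add_smul_self _ hil.symm,
    det_updateCol_add_self A hil]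

section MinKernel

variable {k n : ℕ}

def minKernelDiag (L : R) (g w : Fin k → R) (a : Fin k) : R :=
  L - ∑ c, g (min a c) * w c

def minKernelMatrix (L : R) (g w : Fin k → R) : Matrix (Fin k) (Fin k) R :=
  diagonal (minKernelDiag L g w) + of fun a b => g (min a b) * w b

def mergeLastWeights (w : Fin (n + 2) → R) (a : Fin (n + 1)) : R :=
  w a.castSucc + if a = Fin.last n then w (Fin.last (n + 1)) else 0

theorem minKernelMatrix_apply (L : R) (g w : Fin k → R) (a b : Fin k) :
    minKernelMatrix L g w a b =
      (if a = b then minKernelDiag L g w a else 0) + g (min a b) * w b := by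
  simp [minKernelMatrix, diagonal_apply]

theorem minKernelDiag_last_add (L : R) (g w : Fin (n + 2) → R) :
    minKernelDiag L g w (Fin.last (n + 1)) + g (Fin.last (n + 1)) * w (Fin.last (n + 1)) =
      minKernelDiag L g w (Fin.last n).castSucc + g (Fin.last n).castSucc * w (Fin.last (n + 1)) := by
  simp only [minKernelDiag, Fin.sum_univ_castSucc (n := n + 1), min_eq_right (Fin.le_last _),
    min_eq_left (Fin.castSucc_lt_last _).le, ← Fin.castSucc_min]
  ring

theorem minKernelDiag_mergeLastWeights (L : R) (g w : Fin (n + 2) → R) (a : Fin (n + 1)) :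
    minKernelDiag L (g ∘ Fin.castSucc) (mergeLastWeights w) a = minKernelDiag L g w a.castSucc := by
  simp only [minKernelDiag, mergeLastWeights, Fin.sum_univ_castSucc (n := n + 1),
    Function.comp_apply, mul_add, Finset.sum_add_distrib, mul_ite, mul_zero,
    Finset.sum_ite_eq', Finset.mem_univ, if_true, Fin.castSucc_min,
    min_eq_left (Fin.castSucc_lt_last a).le]
  rw [← Fin.castSucc_min a, min_eq_left (Fin.le_last a), mul_comm]

theorem reduceLastPair_minKernelMatrix_last (L : R) (g w : Fin (n + 2) → R) :
    (minKernelMatrix L g w).reduceLastPair (Fin.last (n + 1)) =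
      Pi.single (Fin.last (n + 1)) (minKernelDiag L g w (Fin.last n).castSucc) := by
  ext b
  simp only [reduceLastPair, updateRow_self, Pi.sub_apply, updateCol_apply, minKernelMatrix_apply]
  set i : Fin (n + 2) := (Fin.last n).castSucc
  set l : Fin (n + 2) := Fin.last (n + 1)
  have hil : i < l := Fin.castSucc_lt_last _
  have hdiag : minKernelDiag L g w l + g l * w l = minKernelDiag L g w i + g i * w l :=
    minKernelDiag_last_add L g w
  rcases eq_or_ne b l with rfl | hbl
  · simp [hil.ne, hil.ne', min_eq_left hil.le]
    linear_combination hdiag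
  rcases eq_or_ne b i with rfl | hbi
  · simp [hil.ne, hil.ne', min_eq_left hil.le, min_eq_right hil.le]
    linear_combination hdiag
  · have hbi' : b < i := by
      simp only [ne_eq, Fin.ext_iff, Fin.lt_def, i, l, Fin.val_last, Fin.val_castSucc] at hbl hbi ⊢
      omega
    simp [hbl, hbl.symm, hbi, hbi.symm, min_eq_right hbi'.le, min_eq_right (hbi'.trans hil).le]

theorem submatrix_reduceLastPair_minKernelMatrix (L : R) (g w : Fin (n + 2) → R) :
    (minKernelMatrix L g w).reduceLastPair.submatrix Fin.castSucc Fin.castSucc =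
      minKernelMatrix L (g ∘ Fin.castSucc) (mergeLastWeights w) := by
  ext a b
  have hal : a.castSucc ≠ Fin.last (n + 1) := Fin.castSucc_ne_last a
  have hai : min a.castSucc (Fin.last n).castSucc = a.castSucc := by
    rw [← Fin.castSucc_min, min_eq_left (Fin.le_last a)]
  have hal' : min a.castSucc (Fin.last (n + 1)) = a.castSucc :=
    min_eq_left (Fin.castSucc_lt_last a).le
  rcases eq_or_ne b (Fin.last n) with rfl | hb
  · simp [reduceLastPair, hal, hai, hal', minKernelMatrix_apply, mergeLastWeights,
      minKernelDiag_mergeLastWeights, min_eq_left (Fin.le_last a)]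
    ring
  · simp [reduceLastPair, hal, hb, minKernelMatrix_apply, mergeLastWeights,
      minKernelDiag_mergeLastWeights, Fin.castSucc_min]

theorem det_minKernelMatrix_succ (L : R) (g w : Fin (n + 2) → R) :
    (minKernelMatrix L g w).det =
      minKernelDiag L g w (Fin.last n).castSucc *
        (minKernelMatrix L (g ∘ Fin.castSucc) (mergeLastWeights w)).det := by
  rw [← det_reduceLastPair, det_eq_mul_det_submatrix_castSucc_of_row_last _ _
    (reduceLastPair_minKernelMatrix_last L g w), submatrix_reduceLastPair_minKernelMatrix]

theorem det_minKernelMatrix (L : R) (g w : Fin (n + 1) → R) :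
    (minKernelMatrix L g w).det = L * ∏ a : Fin n, minKernelDiag L g w a.castSucc := by
  induction n with
  | zero =>
    simp [det_unique, minKernelMatrix_apply, minKernelDiag]
  | succ n ih =>
    rw [det_minKernelMatrix_succ, ih, Fin.prod_univ_castSucc]
    simp only [minKernelDiag_mergeLastWeights]
    ring

end MinKernel

theorem stmt8_general (L : ℕ) (n : ℕ)
    (j : Fin (n + 1) → ℕ) (hj : StrictMono j)
    (m : Fin (n + 1) → ℕ)
    (p : ℕ → ℤ)
    (hp : ∀ x, p x = (L : ℤ) - 2 * ∑ b, (min x (j b) : ℤ) * (m b : ℤ))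
    (F : Matrix (Fin (n + 1)) (Fin (n + 1)) ℤ)
    (hF : ∀ a b, F a b =
      (if a = b then p (j a) else 0) + 2 * (min (j a) (j b) : ℤ) * (m b : ℤ)) :
    F.det = (L : ℤ) * ∏ a : Fin n, p (j a.castSucc) := by
  set g : Fin (n + 1) → ℤ := fun a => j a
  set w : Fin (n + 1) → ℤ := fun b => 2 * m b
  have hmin (a b : Fin (n + 1)) : (min (j a) (j b) : ℤ) = g (min a b) := by
    simp [g, hj.monotone.map_min]
  have hpj (a : Fin (n + 1)) : p (j a) = minKernelDiag (L : ℤ) g w a := by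
    simp only [hp, hmin, minKernelDiag, w, mul_sum, mul_left_comm]
  have hFg : F = minKernelMatrix (L : ℤ) g w := by
    ext a b
    rw [hF, minKernelMatrix_apply, hpj, hmin]
    ring
  rw [hFg, det_minKernelMatrix]
  simp only [hpj]

/-- `det F = L · p_{j₁} ⋯ p_{j_{s-1}}` for the matrix
`F_{j,k} = δ_{j,k} p_j + 2 min(j,k) m_k` with
`p_j = L - 2 Σ_k min(j,k) m_k` (here `s = n+1`). -/
theorem stmt8 (L : ℕ) (hL : 0 < L) (n : ℕ)
    (j : Fin (n + 1) → ℕ) (hj : StrictMono j) (hjpos : ∀ a, 0 < j a)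
    (m : Fin (n + 1) → ℕ) (hm : ∀ a, 0 < m a)
    (p : ℕ → ℤ)
    (hp : ∀ x, p x = (L : ℤ) - 2 * ∑ b, (min x (j b) : ℤ) * (m b : ℤ))
    (F : Matrix (Fin (n + 1)) (Fin (n + 1)) ℤ)
    (hF : ∀ a b, F a b =
      (if a = b then p (j a) else 0) + 2 * (min (j a) (j b) : ℤ) * (m b : ℤ)) :
    F.det = (L : ℤ) * ∏ a : Fin n, p (j a.castSucc) :=
  stmt8_general L n j hj m p hp F hF
end

section
/- Let H = {j₁<⋯<j_s}, m_j > 0 for j ∈ H, p_j = L - 2Σ_k min(j,k)m_k ≥ 0 with p_{j_s} > 0. Define Ω(m) = (det F) · ∏_{j∈H} (1/m_j)·C(p_j + m_j - 1, m_j - 1), where F_{j,k} = δ_{j,k}p_j + 2min(j,k)m_k and C denotes the binomial coefficient. Then Ω(m) = (L / p_{j_s}) · ∏_{j∈H} C(p_j + m_j - 1, m_j); in particular Ω(m) is a positive integer. -/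
/-!
Since `p_a = L - 2 ∑_b min(j_a, j_b) m_b`, every row of `F` sums to `L`, and for `b < a` the
entry `F a b = 2 j_b m_b` agrees with the last row. Adding all columns to the last one and then
subtracting the last row from the others leaves an upper triangular block with diagonal
`p_{j_1}, …, p_{j_{s-1}}`, so `det F = L ∏_{a < s} p_{j_a}`; the closed formula follows from
`m · C(p+m-1, m) = p · C(p+m-1, m-1)`.

Integrality: scaling column `b` of `F` by `C(p_b+m_b-1, m_b-1) / m_b` gives the integer matrix
`δ_{ab} C(p_a+m_a-1, m_a) + 2 min(j_a, j_b) C(p_b+m_b-1, m_b-1)`, whose determinant is `Ω`.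
Positivity follows from the closed formula, as `p_a ≥ p_{j_s} > 0` for every `a`.
-/

open Finset

theorem Nat.cast_add_sub_one_choose {K : Type*} [Field K] [CharZero K] (p m : ℕ) (hm : 0 < m) :
    ((p + m - 1).choose m : K) = p * ((1 / m) * (p + m - 1).choose (m - 1)) := by
  have h := Nat.choose_succ_right_eq (p + m - 1) (m - 1)
  rw [Nat.sub_add_cancel hm, show p + m - 1 - (m - 1) = p by omega] at h
  have hm' : (m : K) ≠ 0 := by exact_mod_cast hm.ne'
  field_simp
  exact_mod_cast h.trans (mul_comm _ _)

namespace Matrix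

variable {R : Type*} [CommRing R]

theorem det_updateCol_mulVec {ι : Type*} [Fintype ι] [DecidableEq ι]
    (A : Matrix ι ι R) (i : ι) (x : ι → R) :
    (A.updateCol i (A *ᵥ x)).det = x i * A.det := by
  rw [← cramer_apply, cramer_eq_adjugate_mulVec, mulVec_mulVec, adjugate_mul, smul_mulVec,
    one_mulVec, Pi.smul_apply, smul_eq_mul, mul_comm]

theorem det_eq_mul_det_submatrix_castSucc {n : ℕ} (A : Matrix (Fin (n + 1)) (Fin (n + 1)) R)
    (h : ∀ i : Fin n, A i.castSucc (Fin.last n) = 0) :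
    A.det = A (Fin.last n) (Fin.last n) * (A.submatrix Fin.castSucc Fin.castSucc).det := by
  rw [det_succ_column A (Fin.last n), Fin.sum_univ_castSucc]
  simp [h, Fin.succAbove_last, ← two_mul, pow_mul]

theorem det_eq_mul_prod_of_sum_row {n : ℕ} (A : Matrix (Fin (n + 1)) (Fin (n + 1)) R) (L : R)
    (hsum : ∀ i, ∑ j, A i j = L) (hlow : ∀ i j, j < i → A i j = A (Fin.last n) j) :
    A.det = L * ∏ i : Fin n, (A i.castSucc i.castSucc - A (Fin.last n) i.castSucc) := by
  set B := A.updateCol (Fin.last n) fun _ => L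
  set D : Matrix (Fin (n + 1)) (Fin (n + 1)) R :=
    of fun i j => if i = Fin.last n then B i j else B i j - B (Fin.last n) j
  have hAB : A.det = B.det := by
    have hrow : A *ᵥ 1 = fun _ => L := funext fun i => by simp [mulVec, dotProduct, hsum]
    simp only [B]
    rw [← hrow, det_updateCol_mulVec, Pi.one_apply, one_mul]
  have hBD : B.det = D.det :=
    det_eq_of_forall_row_eq_smul_add_const (fun i => if i = Fin.last n then 0 else 1)
      (Fin.last n) (by simp) fun i j => by by_cases hi : i = Fin.last n <;> simp [D, hi]
  have hD : D.det = L * (D.submatrix Fin.castSucc Fin.castSucc).det := by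
    rw [det_eq_mul_det_submatrix_castSucc D fun i => by simp [D, B, Fin.castSucc_ne_last]]
    simp [D, B]
  have htri : (D.submatrix Fin.castSucc Fin.castSucc).IsUpperTriangular :=
    fun i j (hji : j < i) => by
      simp only [D, B, submatrix_apply, of_apply, Fin.castSucc_ne_last, if_false,
        updateCol_ne (Fin.castSucc_ne_last _)]
      exact sub_eq_zero.2 (hlow _ _ (Fin.castSucc_lt_castSucc_iff.2 hji))
  rw [hAB, hBD, hD, det_of_isUpperTriangular htri]
  simp [D, B, Fin.castSucc_ne_last, updateCol_ne]

end Matrix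

section Configuration

variable {n : ℕ} {L : ℕ} {j m pval : Fin (n + 1) → ℕ}

theorem pval_last_le (hj : Monotone j)
    (hp : ∀ a, (pval a : ℤ) = (L : ℤ) - 2 * ∑ b, (min (j a) (j b) : ℤ) * (m b : ℤ))
    (a : Fin (n + 1)) : pval (Fin.last n) ≤ pval a := by
  have hmin : ∀ b, (min (j a) (j b) : ℤ) * (m b : ℤ) ≤ (min (j (Fin.last n)) (j b) : ℤ) * m b :=
    fun b => by
      gcongr
      exact hj (Fin.le_last a)
  have := sum_le_sum fun b (_ : b ∈ univ) => hmin b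
  have := hp a
  have := hp (Fin.last n)
  omega

theorem pval_last_pos (hj : Monotone j) (hconf : 2 * ∑ a, j a * m a < L)
    (hp : ∀ a, (pval a : ℤ) = (L : ℤ) - 2 * ∑ b, (min (j a) (j b) : ℤ) * (m b : ℤ)) :
    0 < pval (Fin.last n) := by
  have hsum : ∑ b, (min (j (Fin.last n)) (j b) : ℤ) * (m b : ℤ) = ∑ b, ((j b * m b : ℕ) : ℤ) :=
    sum_congr rfl fun b _ => by
      rw [min_eq_right (by exact_mod_cast hj (Fin.le_last b))]
      push_cast; ring
  have := hp (Fin.last n)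
  rw [hsum, ← Nat.cast_sum] at this
  omega

theorem det_eq_mul_prod_pval (hj : Monotone j)
    (hp : ∀ a, (pval a : ℤ) = (L : ℤ) - 2 * ∑ b, (min (j a) (j b) : ℤ) * (m b : ℤ))
    (F : Matrix (Fin (n + 1)) (Fin (n + 1)) ℤ)
    (hF : ∀ a b, F a b =
      (if a = b then (pval a : ℤ) else 0) + 2 * (min (j a) (j b) : ℤ) * (m b : ℤ)) :
    F.det = L * ∏ i : Fin n, (pval i.castSucc : ℤ) := by
  have hmin : ∀ a b, b ≤ a → (min (j a) (j b) : ℤ) = j b :=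
    fun a b hba => min_eq_right (by exact_mod_cast hj hba)
  rw [F.det_eq_mul_prod_of_sum_row L]
  · simp [hF, hmin _ _ (Fin.le_last _), (Fin.castSucc_ne_last _).symm]
  · intro a
    simp only [hF, sum_add_distrib, sum_ite_eq, mem_univ, if_true, mul_assoc, ← mul_sum]
    linarith [hp a]
  · intro a b hba
    simp [hF, hba.ne', hmin _ _ hba.le, hmin _ _ (Fin.le_last b),
      (hba.trans_le (Fin.le_last a)).ne']

theorem exists_int_eq_det_mul_prod_choose (hm : ∀ a, 0 < m a)
    (F : Matrix (Fin (n + 1)) (Fin (n + 1)) ℤ)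
    (hF : ∀ a b, F a b =
      (if a = b then (pval a : ℤ) else 0) + 2 * (min (j a) (j b) : ℤ) * (m b : ℤ)) :
    ∃ d : ℤ, (F.det : ℚ) *
      ∏ a, (1 / (m a : ℚ)) * ((pval a + m a - 1).choose (m a - 1) : ℚ) = d := by
  set w : Fin (n + 1) → ℚ := fun a => (1 / (m a : ℚ)) * ((pval a + m a - 1).choose (m a - 1) : ℚ)
  let N : Matrix (Fin (n + 1)) (Fin (n + 1)) ℤ := Matrix.of fun a b =>
    (if a = b then ((pval a + m a - 1).choose (m a) : ℤ) else 0) +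
      2 * (min (j a) (j b) : ℤ) * ((pval b + m b - 1).choose (m b - 1) : ℤ)
  refine ⟨N.det, ?_⟩
  have hscale : F.map (Int.cast : ℤ → ℚ) * Matrix.diagonal w = N.map Int.cast := by
    ext a b
    have hmb : (m b : ℚ) ≠ 0 := by exact_mod_cast (hm b).ne'
    by_cases hab : a = b
    · subst hab
      simp [N, w, hF, Matrix.mul_diagonal, Nat.cast_add_sub_one_choose (K := ℚ) _ _ (hm a)]
      field_simp
    · simp [N, w, hF, Matrix.mul_diagonal, hab]
      field_simp
  rw [Int.cast_det, Int.cast_det, ← hscale, Matrix.det_mul, Matrix.det_diagonal]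

end Configuration

theorem stmt9_general (L : ℕ) (hL : 0 < L) (n : ℕ)
    (j : Fin (n + 1) → ℕ) (hj : StrictMono j)
    (m : Fin (n + 1) → ℕ) (hm : ∀ a, 0 < m a)
    (hconf : 2 * ∑ a, j a * m a < L)
    (pval : Fin (n + 1) → ℕ)
    (hp : ∀ a, (pval a : ℤ) = (L : ℤ) - 2 * ∑ b, (min (j a) (j b) : ℤ) * (m b : ℤ))
    (F : Matrix (Fin (n + 1)) (Fin (n + 1)) ℤ)
    (hF : ∀ a b, F a b =
      (if a = b then (pval a : ℤ) else 0) + 2 * (min (j a) (j b) : ℤ) * (m b : ℤ))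
    (Ω : ℚ)
    (hΩ : Ω = (F.det : ℚ) *
      ∏ a, (1 / (m a : ℚ)) * (Nat.choose (pval a + m a - 1) (m a - 1) : ℚ)) :
    Ω = ((L : ℚ) / (pval (Fin.last n) : ℚ)) *
        ∏ a, (Nat.choose (pval a + m a - 1) (m a) : ℚ) ∧
      ∃ z : ℕ, 0 < z ∧ Ω = (z : ℚ) := by
  have hlast := pval_last_pos hj.monotone hconf hp
  have hformula : Ω = ((L : ℚ) / (pval (Fin.last n) : ℚ)) *
      ∏ a, (Nat.choose (pval a + m a - 1) (m a) : ℚ) := by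
    rw [hΩ, det_eq_mul_prod_pval hj.monotone hp F hF,
      prod_congr rfl fun a _ => Nat.cast_add_sub_one_choose _ _ (hm a),
      prod_mul_distrib (f := fun a => (pval a : ℚ)), Fin.prod_univ_castSucc (fun a => (pval a : ℚ))]
    push_cast
    field_simp
  have hpos : 0 < Ω := by
    have hchoose : 0 < ∏ a, (Nat.choose (pval a + m a - 1) (m a) : ℚ) := prod_pos fun a _ => by
      have := pval_last_le hj.monotone hp a
      exact_mod_cast Nat.choose_pos (by omega)
    rw [hformula]
    exact mul_pos (div_pos (by exact_mod_cast hL) (by exact_mod_cast hlast)) hchoose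
  obtain ⟨d, hd⟩ := exists_int_eq_det_mul_prod_choose hm F hF
  rw [← hΩ] at hd
  lift d to ℕ using by exact_mod_cast (hd ▸ hpos).le
  exact ⟨hformula, d, by exact_mod_cast hd ▸ hpos, hd⟩

/-- `Ω(m) = (det F) ∏_j (1/m_j) C(p_j+m_j-1, m_j-1)` equals
`(L/p_{j_s}) ∏_j C(p_j+m_j-1, m_j)`, and is a positive integer
(here `s = n+1`, `j_s` is the last, largest, index). -/
theorem stmt9 (L : ℕ) (hL : 0 < L) (n : ℕ)
    (j : Fin (n + 1) → ℕ) (hj : StrictMono j) (hjpos : ∀ a, 0 < j a)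
    (m : Fin (n + 1) → ℕ) (hm : ∀ a, 0 < m a)
    (hconf : 2 * ∑ a, j a * m a < L)
    (pval : Fin (n + 1) → ℕ)
    (hp : ∀ a, (pval a : ℤ) = (L : ℤ) - 2 * ∑ b, (min (j a) (j b) : ℤ) * (m b : ℤ))
    (F : Matrix (Fin (n + 1)) (Fin (n + 1)) ℤ)
    (hF : ∀ a b, F a b =
      (if a = b then (pval a : ℤ) else 0) + 2 * (min (j a) (j b) : ℤ) * (m b : ℤ))
    (Ω : ℚ)
    (hΩ : Ω = (F.det : ℚ) *
      ∏ a, (1 / (m a : ℚ)) * (Nat.choose (pval a + m a - 1) (m a - 1) : ℚ)) :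
    Ω = ((L : ℚ) / (pval (Fin.last n) : ℚ)) *
        ∏ a, (Nat.choose (pval a + m a - 1) (m a) : ℚ) ∧
      ∃ z : ℕ, 0 < z ∧ Ω = (z : ℚ) :=
  stmt9_general L hL n j hj m hm hconf pval hp F hF Ω hΩ
end

section
/- For the γ×γ matrix A with entries A_{jα,kβ} = δ_{j,k}δ_{α,β}(p_j + m_j) + 2·min(j,k) - δ_{j,k}, indexed by pairs (j,α) with j ∈ H, 1 ≤ α ≤ m_j, one has det A = (det F) · ∏_{j∈H} (p_j + m_j)^{m_j - 1}, where F_{j,k} = δ_{j,k}p_j + 2·min(j,k)m_k. -/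
open Matrix Finset Polynomial

theorem keylem {K : Type*} [Field K] (s : ℕ) (m : Fin s → ℕ) (hm : ∀ a, 0 < m a)
    (d : Fin s → K) (hd : ∀ a, d a ≠ 0) (C : Matrix (Fin s) (Fin s) K) :
    (Matrix.diagonal (fun x : (a : Fin s) × Fin (m a) => d x.1)
      + (Matrix.of fun (x : (a : Fin s) × Fin (m a)) b => if x.1 = b then (1:K) else 0) * C *
        (Matrix.of fun (x : (a : Fin s) × Fin (m a)) b => if x.1 = b then (1:K) else 0)ᵀ).det
    = (Matrix.diagonal d + C * Matrix.diagonal (fun a => (m a : K))).det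
        * ∏ a, d a ^ (m a - 1) := by
  set E : Matrix ((a : Fin s) × Fin (m a)) (Fin s) K :=
    Matrix.of fun x b => if x.1 = b then (1:K) else 0 with hE
  set D : Matrix ((a : Fin s) × Fin (m a)) ((a : Fin s) × Fin (m a)) K :=
    Matrix.diagonal (fun x => d x.1) with hD
  set D' : Matrix ((a : Fin s) × Fin (m a)) ((a : Fin s) × Fin (m a)) K :=
    Matrix.diagonal (fun x => (d x.1)⁻¹) with hD'
  have hDD' : D * D' = 1 := by
    have h1 : (fun x : (a : Fin s) × Fin (m a) => d x.1 * (d x.1)⁻¹) = fun _ => 1 :=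
      funext fun x => mul_inv_cancel₀ (hd x.1)
    rw [hD, hD', diagonal_mul_diagonal, h1, diagonal_one]
  have h2 : D * ((D' * E) * (C * Eᵀ)) = E * C * Eᵀ := by
    rw [← Matrix.mul_assoc D, ← Matrix.mul_assoc D, hDD', Matrix.one_mul, Matrix.mul_assoc]
  have hsplit : D + E * C * Eᵀ = D * (1 + (D' * E) * (C * Eᵀ)) := by
    rw [mul_add, mul_one, h2]
  have hEDE : Eᵀ * (D' * E) = Matrix.diagonal (fun a => (m a : K) * (d a)⁻¹) := by
    ext a b
    rw [Matrix.mul_apply]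
    have key : ∀ x : (a : Fin s) × Fin (m a), Eᵀ a x * (D' * E) x b
        = (if x.1 = a then (1:K) else 0) * ((d x.1)⁻¹ * if x.1 = b then 1 else 0) := by
      intro x
      rw [Matrix.transpose_apply, hD', Matrix.diagonal_mul]
      rfl
    rw [Finset.sum_congr rfl fun x _ => key x, ← Finset.univ_sigma_univ, Finset.sum_sigma]
    simp only [Finset.sum_const, Finset.card_univ, Fintype.card_fin, nsmul_eq_mul]
    rw [Finset.sum_eq_single a]
    · rw [Matrix.diagonal_apply]
      by_cases hab : a = b <;> simp [hab]
    · intro c _ hca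
      simp [hca]
    · intro h
      exact absurd (Finset.mem_univ a) h
  have hdetD : D.det = ∏ a, d a ^ m a := by
    rw [hD, Matrix.det_diagonal, ← Finset.univ_sigma_univ, Finset.prod_sigma]
    simp
  have step2 : (1 + (C * Eᵀ) * (D' * E)) =
      (Matrix.diagonal d + C * Matrix.diagonal (fun a => (m a : K))) *
        Matrix.diagonal (fun a => (d a)⁻¹) := by
    rw [Matrix.mul_assoc, hEDE, add_mul, mul_assoc, diagonal_mul_diagonal, diagonal_mul_diagonal]
    have h1 : (fun a => d a * (d a)⁻¹) = fun _ => (1:K) :=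
      funext fun a => mul_inv_cancel₀ (hd a)
    rw [h1, diagonal_one]
  rw [hsplit, Matrix.det_mul, Matrix.det_one_add_mul_comm, step2, Matrix.det_mul, hdetD,
    Matrix.det_diagonal]
  rw [mul_comm ((Matrix.diagonal d + C * Matrix.diagonal fun a => (m a : K)).det) _,
    ← mul_assoc, mul_comm]
  congr 1
  rw [mul_comm, ← Finset.prod_mul_distrib]
  refine Finset.prod_congr rfl fun a _ => ?_
  have h3 : d a ^ m a = d a ^ (m a - 1) * d a := by
    rw [← pow_succ, Nat.sub_add_cancel (hm a)]
  rw [h3, mul_comm, mul_assoc, mul_inv_cancel₀ (hd a), mul_one]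

theorem ECE {K : Type*} [CommRing K] (s : ℕ) (m : Fin s → ℕ) (M : Matrix (Fin s) (Fin s) K)
    (x y : (a : Fin s) × Fin (m a)) :
    ((Matrix.of fun (x : (a : Fin s) × Fin (m a)) b => if x.1 = b then (1:K) else 0) * M *
      (Matrix.of fun (x : (a : Fin s) × Fin (m a)) b => if x.1 = b then (1:K) else 0)ᵀ) x y
    = M x.1 y.1 := by
  rw [Matrix.mul_apply]
  simp [Matrix.mul_apply, Matrix.transpose_apply, ite_mul, mul_ite, Finset.sum_ite_eq,
    Finset.sum_ite_eq']

/-- `det A = (det F) ∏_{j∈H} (p_j + m_j)^{m_j - 1}` where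
`A_{jα,kβ} = δ_{j,k}δ_{α,β}(p_j+m_j) + 2 min(j,k) - δ_{j,k}` (indexed by pairs
`(j,α)` with `j ∈ H`, `1 ≤ α ≤ m_j`) and `F_{j,k} = δ_{j,k}p_j + 2 min(j,k) m_k`. -/
theorem stmt10 (s : ℕ)
    (j : Fin s → ℕ) (hj : StrictMono j) (hjpos : ∀ a, 0 < j a)
    (m : Fin s → ℕ) (hm : ∀ a, 0 < m a)
    (p : Fin s → ℤ)
    (A : Matrix ((a : Fin s) × Fin (m a)) ((a : Fin s) × Fin (m a)) ℤ)
    (hA : ∀ x y, A x y =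
      (if x = y then p x.1 + (m x.1 : ℤ) else 0) + 2 * (min (j x.1) (j y.1) : ℤ)
        - (if x.1 = y.1 then 1 else 0))
    (F : Matrix (Fin s) (Fin s) ℤ)
    (hF : ∀ a b, F a b =
      (if a = b then p a else 0) + 2 * (min (j a) (j b) : ℤ) * (m b : ℤ)) :
    A.det = F.det * ∏ a, (p a + (m a : ℤ)) ^ (m a - 1) := by
  classical
  set K := FractionRing (Polynomial ℤ) with hK
  set φ : Polynomial ℤ →+* K := (algebraMap (Polynomial ℤ) K : Polynomial ℤ →+* K) with hφ
  have hinj : Function.Injective φ := IsFractionRing.injective (Polynomial ℤ) K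
  set At : Matrix ((a : Fin s) × Fin (m a)) ((a : Fin s) × Fin (m a)) (Polynomial ℤ) :=
    Matrix.of fun x y =>
      (if x = y then Polynomial.X + Polynomial.C (p x.1 + (m x.1 : ℤ)) else 0)
      + Polynomial.C (2 * (min (j x.1) (j y.1) : ℤ))
      - (if x.1 = y.1 then 1 else 0) with hAt
  set Ft : Matrix (Fin s) (Fin s) (Polynomial ℤ) :=
    Matrix.of fun a b =>
      (if a = b then Polynomial.X + Polynomial.C (p a) else 0)
      + Polynomial.C (2 * (min (j a) (j b) : ℤ) * (m b : ℤ)) with hFt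
  set d : Fin s → K := fun a => φ (Polynomial.X + Polynomial.C (p a + (m a : ℤ))) with hd
  set Cm : Matrix (Fin s) (Fin s) K :=
    Matrix.of fun a b => φ (Polynomial.C (2 * (min (j a) (j b) : ℤ)))
      - (if a = b then 1 else 0) with hCm
  have hdne : ∀ a, d a ≠ 0 := by
    intro a
    rw [hd]
    exact (map_ne_zero_iff φ hinj).mpr (Polynomial.X_add_C_ne_zero _)
  have hmK : ∀ a, φ (Polynomial.C ((m a : ℤ))) = ((m a : ℕ) : K) := by
    intro a
    rw [map_natCast (Polynomial.C : ℤ →+* Polynomial ℤ), map_natCast φ]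
  have hAmap : At.map φ = Matrix.diagonal (fun x : (a : Fin s) × Fin (m a) => d x.1)
      + (Matrix.of fun (x : (a : Fin s) × Fin (m a)) b => if x.1 = b then (1:K) else 0) * Cm *
        (Matrix.of fun (x : (a : Fin s) × Fin (m a)) b => if x.1 = b then (1:K) else 0)ᵀ := by
    ext x y
    rw [Matrix.map_apply, Matrix.add_apply, ECE, Matrix.diagonal_apply, hAt, hCm]
    simp only [Matrix.of_apply, map_sub, _root_.map_add, apply_ite φ, map_zero,
      _root_.map_one, hd]
    ring
  have hFmap : Ft.map φ = Matrix.diagonal d + Cm * Matrix.diagonal (fun a => ((m a : ℕ) : K)) := by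
    ext a b
    rw [Matrix.map_apply, Matrix.add_apply, Matrix.mul_diagonal, Matrix.diagonal_apply, hFt, hCm]
    simp only [Matrix.of_apply, Polynomial.C_add, Polynomial.C_mul, _root_.map_add,
      _root_.map_mul, apply_ite φ, map_zero, hmK, hd]
    split_ifs with h
    · subst h; ring
    · ring
  have hdet1 : (At.map φ).det = (Ft.map φ).det * ∏ a, d a ^ (m a - 1) := by
    rw [hAmap, hFmap]
    exact keylem s m hm d hdne Cm
  have hdet2 : At.det = Ft.det * ∏ a, (Polynomial.X + Polynomial.C (p a + (m a : ℤ))) ^ (m a - 1) := by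
    apply hinj
    rw [_root_.map_mul, map_prod]
    simp_rw [_root_.map_pow]
    rw [show φ At.det = (At.map φ).det from (RingHom.map_det φ At).trans rfl,
      show φ Ft.det = (Ft.map φ).det from (RingHom.map_det φ Ft).trans rfl, hdet1, hd]
  have hψA : At.map (Polynomial.evalRingHom (0:ℤ)) = A := by
    ext x y
    rw [Matrix.map_apply, hAt, hA]
    simp only [Matrix.of_apply, coe_evalRingHom, Polynomial.eval_sub, Polynomial.eval_add,
      apply_ite (Polynomial.eval (0:ℤ)), Polynomial.eval_zero, Polynomial.eval_one,
      Polynomial.eval_X, Polynomial.eval_C]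
    ring
  have hψF : Ft.map (Polynomial.evalRingHom (0:ℤ)) = F := by
    ext a b
    rw [Matrix.map_apply, hFt, hF]
    simp only [Matrix.of_apply, Polynomial.eval_add, coe_evalRingHom,
      apply_ite (Polynomial.eval (0:ℤ)), Polynomial.eval_zero,
      Polynomial.eval_X, Polynomial.eval_C]
    ring
  have := congrArg (Polynomial.evalRingHom (0:ℤ)) hdet2
  rw [_root_.map_mul, map_prod] at this
  simp only [coe_evalRingHom, Polynomial.eval_pow, Polynomial.eval_add, Polynomial.eval_X,
    Polynomial.eval_C, zero_add] at this
  rw [show A.det = (Polynomial.evalRingHom (0:ℤ)) At.det from by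
      rw [← hψA, ← RingHom.mapMatrix_apply, ← RingHom.map_det],
    show F.det = (Polynomial.evalRingHom (0:ℤ)) Ft.det from by
      rw [← hψF, ← RingHom.mapMatrix_apply, ← RingHom.map_det]]
  exact this
end

section
/- With A as above and A[kβ] obtained from A by replacing the (kβ)-th column by the vector h = (min(j,l))_{jα} (for a fixed l ≥ 1), one has det A[kβ] = (det F[k]) · ∏_{j∈H}(p_j+m_j)^{m_j-1}, where F[k] is F with its k-th column replaced by h' = (min(j,l))_{j∈H}. Consequently det A[jα]/det A = det F[j]/det F whenever det A ≠ 0. -/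
/-!
Pick in every block `a` a representative index `r a`. Since the block-constant part of `A` depends
on the row only through its block, subtracting the representative row from the other rows of its
block leaves `(p_a + m_a)(e_x - e_{r a})`; adding the other columns of each block to its
representative column then makes the matrix block triangular, with diagonal `p_a + m_a` on the `m_a - 1`
non-representatives of each block and, on the representatives, the block row sums, which form `F`.
For `A[kβ]` take `β` as the representative of block `k`: the replaced column is block-constant, so
the row operations kill it off the representatives, and the column operations simply skip block
`k`, leaving `h'` as the `k`-th column of the compressed matrix.
-/

open Matrix Finset

theorem Fintype.sum_filter_fst_eq {κ R : Type*} [Fintype κ] [DecidableEq κ] [AddCommMonoid R]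
    {β : κ → Type*} [∀ a, Fintype (β a)] (f : (Σ a, β a) → R) (b : κ) :
    ∑ x with x.1 = b, f x = ∑ i, f ⟨b, i⟩ := by
  rw [Finset.sum_filter, Fintype.sum_sigma,
    Finset.sum_eq_single b (fun a _ hab => by simp [hab]) (by simp)]
  simp

theorem Fintype.prod_fst_of_ne_rep {κ M : Type*} [Fintype κ] [DecidableEq κ] [CommMonoid M]
    {m : κ → ℕ} (c : κ → M) (r : ∀ a, Fin (m a)) :
    ∏ x : {x : Σ a, Fin (m a) // ⟨x.1, r x.1⟩ ≠ x}, c x.1.1 = ∏ a, c a ^ (m a - 1) := by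
  rw [← Finset.prod_subtype (univ.sigma fun a => univ.erase (r a))
    (by simp [Sigma.ext_iff, eq_comm]) (fun x => c x.1), Finset.prod_sigma]
  simp

namespace Matrix

variable {R κ : Type*} [CommRing R] [DecidableEq κ]

theorem det_fromBlocks_of_mul_eq {ν : Type*} [Fintype κ] [Fintype ν] [DecidableEq ν]
    (A : Matrix κ κ R) (B : Matrix κ ν R) (P C : Matrix ν κ R) (D : Matrix ν ν R)
    (L : Matrix ν κ R) (hL : D * L = C) :
    (fromBlocks A B (P * A - C) (P * B + D)).det = (A + B * L).det * D.det := by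
  have hreduce : fromBlocks 1 0 (-P) 1 * fromBlocks A B (P * A - C) (P * B + D) *
      fromBlocks 1 0 L 1 = fromBlocks (A + B * L) B 0 D := by
    simp only [fromBlocks_multiply, ← hL]
    congr 1 <;> simp only [Matrix.add_mul, Matrix.mul_add, Matrix.neg_mul, Matrix.mul_sub,
      Matrix.one_mul, Matrix.mul_one, Matrix.zero_mul, Matrix.mul_zero, Matrix.mul_assoc] <;> abel
  have := congrArg det hreduce
  rwa [det_mul, det_mul, det_fromBlocks_zero₁₂, det_fromBlocks_zero₁₂, det_fromBlocks_zero₂₁,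
    det_one, det_one, one_mul, one_mul, mul_one] at this

/- Reordering the index set as representatives followed by the rest puts `M` into the shape of
`det_fromBlocks_of_mul_eq`, with `L` the weights `w` on the non-representatives. -/
theorem det_eq_of_row_sub_rep {ι : Type*} [Fintype ι] [DecidableEq ι] [Fintype κ]
    (π : ι → κ) (σ : κ → ι) (hπσ : Function.LeftInverse π σ) (M : Matrix ι ι R) (d w : ι → R)
    (hM : ∀ x z, M x z = M (σ (π x)) z + (if z = x then d z else 0) -
      (if z = σ (π x) then d z else 0))
    (hw : ∀ x, σ (π x) ≠ x → d x * w x = d (σ (π x))) (hwσ : ∀ a, w (σ a) = 1) :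
    M.det = (of fun a b => ∑ x with π x = b, w x * M (σ a) x).det *
      ∏ x : {x // σ (π x) ≠ x}, d x := by
  let reps : κ ≃ {x // σ (π x) = x} :=
    { toFun a := ⟨σ a, by rw [hπσ a]⟩
      invFun x := π x
      left_inv := hπσ
      right_inv x := Subtype.ext x.2 }
  let e : κ ⊕ {x // σ (π x) ≠ x} ≃ ι :=
    (Equiv.sumCongr reps (Equiv.refl _)).trans (Equiv.sumCompl fun x => σ (π x) = x)
  have hσ_ne {n : {x // σ (π x) ≠ x}} {b : κ} : σ b ≠ n := fun h => n.2 (by rw [← h, hπσ])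
  let A : Matrix κ κ R := of fun a b => M (σ a) (σ b)
  let B : Matrix κ {x // σ (π x) ≠ x} R := of fun a n => M (σ a) n
  let P : Matrix {x // σ (π x) ≠ x} κ R := of fun n a => if π n = a then 1 else 0
  let C : Matrix {x // σ (π x) ≠ x} κ R := of fun n b => if π n = b then d (σ b) else 0
  let L : Matrix {x // σ (π x) ≠ x} κ R := of fun n b => if π n = b then w n else 0
  let D : Matrix {x // σ (π x) ≠ x} {x // σ (π x) ≠ x} R := diagonal fun n => d n
  have hblocks : M.submatrix e e = fromBlocks A B (P * A - C) (P * B + D) := by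
    ext (a | n) (b | n')
    · rfl
    · rfl
    · simp only [submatrix_apply, fromBlocks_apply₂₁, sub_apply, P, mul_apply]
      change M n (σ b) = _
      rw [hM n (σ b)]
      simp [A, C, hσ_ne, hπσ.injective.eq_iff, eq_comm]
    · simp only [submatrix_apply, fromBlocks_apply₂₂, add_apply, P, mul_apply]
      change M n n' = _
      rw [hM n n', if_neg hσ_ne.symm, sub_zero]
      by_cases h : n = n'
      · simp [B, D, h]
      · simp [B, D, h, Subtype.coe_ne_coe.mpr (Ne.symm h)]
  rw [← det_submatrix_equiv_self e, hblocks, det_fromBlocks_of_mul_eq _ _ _ _ _ L, det_diagonal]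
  · congr 2
    ext a b
    simp only [A, B, L, add_apply, mul_apply, of_apply, mul_ite, mul_zero]
    rw [Finset.sum_filter, ← e.sum_comp, Fintype.sum_sum_type]
    simp [e, reps, hπσ _, hwσ, mul_comm]
  · ext n b
    simp only [D, L, C, diagonal_mul, of_apply, mul_ite, mul_zero]
    split_ifs with h
    · rw [hw n n.2, h]
    · rfl

variable {m : κ → ℕ}

def blockExpand (m : κ → ℕ) (c : κ → R) (K : Matrix κ κ R) :
    Matrix (Σ a, Fin (m a)) (Σ a, Fin (m a)) R :=
  of fun x z => (if x = z then c x.1 else 0) + K x.1 z.1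

theorem blockExpand_apply_eq_rep (c : κ → R) (K : Matrix κ κ R) (r : ∀ a, Fin (m a))
    (x z : Σ a, Fin (m a)) : blockExpand m c K x z = blockExpand m c K ⟨x.1, r x.1⟩ z +
      (if z = x then c z.1 else 0) - (if z = ⟨x.1, r x.1⟩ then c z.1 else 0) := by
  simp only [blockExpand, of_apply]
  simp +contextual only [eq_comm (b := z)]
  ring

theorem sum_fst_eq_blockExpand [Fintype κ] (c : κ → R) (K : Matrix κ κ R) (r : ∀ a, Fin (m a))
    (a b : κ) : ∑ x with x.1 = b, blockExpand m c K ⟨a, r a⟩ x =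
      (diagonal c + K * diagonal fun a => (m a : R)) a b := by
  rw [Fintype.sum_filter_fst_eq]
  by_cases h : a = b
  · subst h
    simp [blockExpand, Finset.sum_add_distrib, mul_comm]
  · simp [blockExpand, h, mul_comm]

theorem det_blockExpand [Fintype κ] (c : κ → R) (K : Matrix κ κ R) (hm : ∀ a, 0 < m a) :
    (blockExpand m c K).det =
      (diagonal c + K * diagonal fun a => (m a : R)).det * ∏ a, c a ^ (m a - 1) := by
  let r a : Fin (m a) := ⟨0, hm a⟩
  rw [det_eq_of_row_sub_rep Sigma.fst (fun a => ⟨a, r a⟩) (fun _ => rfl) _ (fun z => c z.1) 1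
    (blockExpand_apply_eq_rep c K r) (fun _ _ => by simp) (fun _ => rfl),
    Fintype.prod_fst_of_ne_rep]
  congr 2
  ext a b
  simpa using sum_fst_eq_blockExpand c K r a b

theorem det_updateCol_blockExpand [Fintype κ] (c : κ → R) (K : Matrix κ κ R)
    (hm : ∀ a, 0 < m a) (y : Σ a, Fin (m a)) (v : κ → R) :
    ((blockExpand m c K).updateCol y fun x => v x.1).det =
      ((diagonal c + K * diagonal fun a => (m a : R)).updateCol y.1 v).det *
        ∏ a, c a ^ (m a - 1) := by
  let r : ∀ a, Fin (m a) := Function.update (fun a => ⟨0, hm a⟩) y.1 y.2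
  have hrep (x : Σ a, Fin (m a)) (hx : x.1 = y.1) : ⟨x.1, r x.1⟩ = y := by
    obtain ⟨a, β⟩ := x
    subst hx
    simp [r]
  let d z : R := if z = y then 0 else c z.1
  let w (x : Σ a, Fin (m a)) : R := if x.1 = y.1 ∧ x ≠ y then 0 else 1
  have hM x z : ((blockExpand m c K).updateCol y fun x => v x.1) x z =
      ((blockExpand m c K).updateCol y fun x => v x.1) ⟨x.1, r x.1⟩ z +
        (if z = x then d z else 0) - (if z = ⟨x.1, r x.1⟩ then d z else 0) := by
    by_cases hz : z = y
    · simp [hz, d]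
    · simpa [updateCol_apply, hz, d] using blockExpand_apply_eq_rep c K r x z
  have hw x (hx : ⟨x.1, r x.1⟩ ≠ x) : d x * w x = d ⟨x.1, r x.1⟩ := by
    have hxy : x ≠ y := fun h => hx (by rw [hrep x (congrArg Sigma.fst h), h])
    by_cases h : x.1 = y.1
    · simp [d, w, h, hxy, hrep x h]
    · have : (⟨x.1, r x.1⟩ : Σ a, Fin (m a)) ≠ y := fun h' =>
        h (by simpa using congrArg Sigma.fst h')
      simp [d, w, h, hxy, this]
  have hwσ a : w ⟨a, r a⟩ = 1 := by
    simp only [w, ite_eq_right_iff]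
    exact fun h => (h.2 (hrep ⟨a, r a⟩ h.1)).elim
  rw [det_eq_of_row_sub_rep Sigma.fst (fun a => ⟨a, r a⟩) (fun _ => rfl) _ d w hM hw hwσ]
  congr 1
  · congr 1
    ext a b
    by_cases hb : b = y.1
    · subst hb
      rw [of_apply, updateCol_self, Finset.sum_eq_single_of_mem y (by simp)]
      · simp [w]
      · intro x hx hxy
        simp [w, (Finset.mem_filter.mp hx).2, hxy]
    · rw [of_apply, updateCol_ne hb, ← sum_fst_eq_blockExpand c K r]
      refine Finset.sum_congr rfl fun x hx => ?_
      have hxb : x.1 = b := (Finset.mem_filter.mp hx).2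
      have hxy : x ≠ y := fun h => hb (h ▸ hxb).symm
      simp [w, hxb, hb, updateCol_ne hxy]
  · rw [← Fintype.prod_fst_of_ne_rep c r]
    refine Fintype.prod_congr _ _ fun x => if_neg fun h => x.2 ?_
    rw [hrep x (congrArg Sigma.fst h), h]

end Matrix

theorem stmt11_general (s : ℕ)
    (j : Fin s → ℕ)
    (m : Fin s → ℕ) (hm : ∀ a, 0 < m a)
    (p : Fin s → ℤ) (l : ℕ)
    (A : Matrix ((a : Fin s) × Fin (m a)) ((a : Fin s) × Fin (m a)) ℤ)
    (hA : ∀ x y, A x y =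
      (if x = y then p x.1 + (m x.1 : ℤ) else 0) + 2 * (min (j x.1) (j y.1) : ℤ)
        - (if x.1 = y.1 then 1 else 0))
    (F : Matrix (Fin s) (Fin s) ℤ)
    (hF : ∀ a b, F a b =
      (if a = b then p a else 0) + 2 * (min (j a) (j b) : ℤ) * (m b : ℤ)) :
    (∀ y : (a : Fin s) × Fin (m a),
      (A.updateCol y (fun x => (min (j x.1) l : ℤ))).det =
        (F.updateCol y.1 (fun a => (min (j a) l : ℤ))).det *
          ∏ a, (p a + (m a : ℤ)) ^ (m a - 1)) ∧
    (A.det ≠ 0 → ∀ y : (a : Fin s) × Fin (m a),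
      ((A.updateCol y (fun x => (min (j x.1) l : ℤ))).det : ℚ) / (A.det : ℚ) =
        ((F.updateCol y.1 (fun a => (min (j a) l : ℤ))).det : ℚ) / (F.det : ℚ)) := by
  let K : Matrix (Fin s) (Fin s) ℤ :=
    of fun a b => 2 * (min (j a) (j b) : ℤ) - if a = b then 1 else 0
  have hAK : A = blockExpand m (fun a => p a + m a) K := by
    ext x y
    simp only [hA, blockExpand, K, of_apply]
    ring
  have hFK : F = diagonal (fun a => p a + m a) + K * diagonal fun a => (m a : ℤ) := by
    ext a b
    by_cases h : a = b
    · subst h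
      simp [hF, K]
      ring
    · simp [hF, K, h]
  have hupdate y : (A.updateCol y fun x => (min (j x.1) l : ℤ)).det =
      (F.updateCol y.1 fun a => (min (j a) l : ℤ)).det * ∏ a, (p a + (m a : ℤ)) ^ (m a - 1) := by
    rw [hAK, hFK]
    exact det_updateCol_blockExpand _ K hm y fun a => (min (j a) l : ℤ)
  have hdet : A.det = F.det * ∏ a, (p a + (m a : ℤ)) ^ (m a - 1) := by
    rw [hAK, hFK]
    exact det_blockExpand _ K hm
  refine ⟨hupdate, fun hA0 y => ?_⟩
  rw [hupdate y, hdet]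
  push_cast
  exact mul_div_mul_right _ _ (by exact_mod_cast right_ne_zero_of_mul (hdet ▸ hA0))

/-- `det A[kβ] = (det F[k]) ∏_{j∈H}(p_j+m_j)^{m_j-1}`, where `A[kβ]` is `A`
with its `(k,β)`-th column replaced by `h = (min(j,l))_{jα}` and `F[k]` is `F`
with its `k`-th column replaced by `h' = (min(j,l))_{j∈H}`; consequently
`det A[jα] / det A = det F[j] / det F` whenever `det A ≠ 0`. -/
theorem stmt11 (s : ℕ)
    (j : Fin s → ℕ) (hj : StrictMono j) (hjpos : ∀ a, 0 < j a)
    (m : Fin s → ℕ) (hm : ∀ a, 0 < m a)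
    (p : Fin s → ℤ) (l : ℕ) (hl : 1 ≤ l)
    (A : Matrix ((a : Fin s) × Fin (m a)) ((a : Fin s) × Fin (m a)) ℤ)
    (hA : ∀ x y, A x y =
      (if x = y then p x.1 + (m x.1 : ℤ) else 0) + 2 * (min (j x.1) (j y.1) : ℤ)
        - (if x.1 = y.1 then 1 else 0))
    (F : Matrix (Fin s) (Fin s) ℤ)
    (hF : ∀ a b, F a b =
      (if a = b then p a else 0) + 2 * (min (j a) (j b) : ℤ) * (m b : ℤ)) :
    (∀ y : (a : Fin s) × Fin (m a),
      (A.updateCol y (fun x => (min (j x.1) l : ℤ))).det =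
        (F.updateCol y.1 (fun a => (min (j a) l : ℤ))).det *
          ∏ a, (p a + (m a : ℤ)) ^ (m a - 1)) ∧
    (A.det ≠ 0 → ∀ y : (a : Fin s) × Fin (m a),
      ((A.updateCol y (fun x => (min (j x.1) l : ℤ))).det : ℚ) / (A.det : ℚ) =
        ((F.updateCol y.1 (fun a => (min (j a) l : ℤ))).det : ℚ) / (F.det : ℚ)) :=
  stmt11_general s j m hm p l A hA F hF
end

section
/- Suppose the string center equation A·u = c + I holds, where A_{jα,kβ} = δ_{j,k}δ_{α,β}(p_j+m_j) + 2min(j,k) - δ_{j,k}, c has components (p_j+m_j+1)/2 and I is an integer vector, and suppose N ∈ ℤ≥1 satisfies N·A⁻¹·h ∈ ℤ^γ where h = (min(j,l))_{jα}. Then Λ^N = 1, where Λ = exp(2πi·Σ_{jα} min(j,l)(u^{(j)}_α + 1/2)). -/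
/-- If the string center equation `A·u = c + I` holds (with
`A_{jα,kβ} = δ_{j,k}δ_{α,β}(p_j+m_j) + 2 min(j,k) - δ_{j,k}`,
`c_{jα} = (p_j+m_j+1)/2`, `I` an integer vector) and `N ≥ 1` satisfies
`N·A⁻¹·h ∈ ℤ^γ` with `h = (min(j,l))_{jα}`, then `Λ^N = 1` for the Bethe
eigenvalue `Λ = exp(2πi Σ_{jα} min(j,l)(u^{(j)}_α + 1/2))`. -/
theorem stmt12 (L : ℕ) (hL : 0 < L) (s : ℕ) (hs : 0 < s)
    (j : Fin s → ℕ) (hj : StrictMono j) (hjpos : ∀ a, 0 < j a)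
    (m : Fin s → ℕ) (hm : ∀ a, 0 < m a)
    (p : Fin s → ℤ)
    (hp : ∀ a, p a = (L : ℤ) - 2 * ∑ b, (min (j a) (j b) : ℤ) * (m b : ℤ))
    (l : ℕ) (hl : 1 ≤ l)
    (A : Matrix ((a : Fin s) × Fin (m a)) ((a : Fin s) × Fin (m a)) ℚ)
    (hA : ∀ x y, A x y =
      (if x = y then (p x.1 : ℚ) + (m x.1 : ℚ) else 0)
        + 2 * (min (j x.1) (j y.1) : ℚ) - (if x.1 = y.1 then 1 else 0))
    (hAdet : IsUnit A.det)
    (u : (a : Fin s) × Fin (m a) → ℝ)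
    (Iv : (a : Fin s) × Fin (m a) → ℤ)
    (hu : ∀ x, ∑ y, (A x y : ℝ) * u y =
      ((p x.1 : ℝ) + (m x.1 : ℝ) + 1) / 2 + (Iv x : ℝ))
    (N : ℕ) (hN : 0 < N)
    (hNh : ∀ x, ∃ z : ℤ,
      (N : ℚ) * (A⁻¹.mulVec (fun y => (min (j y.1) l : ℚ))) x = (z : ℚ)) :
    (Complex.exp (2 * Real.pi * Complex.I *
      ∑ x : (a : Fin s) × Fin (m a),
        ((min (j x.1) l : ℕ) : ℂ) * ((u x : ℂ) + 1 / 2))) ^ N = 1 := by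
  classical
  set hq : ((a : Fin s) × Fin (m a)) → ℚ := fun y => (min (j y.1) l : ℚ) with hhq
  set v : ((a : Fin s) × Fin (m a)) → ℚ := A⁻¹.mulVec hq with hv
  choose z hz using hNh
  -- A applied to v gives back hq
  have hAv : A.mulVec v = hq := by
    rw [hv, Matrix.mulVec_mulVec, Matrix.mul_nonsing_inv _ hAdet, Matrix.one_mulVec]
  -- symmetry of A
  have hAs : ∀ x y : (a : Fin s) × Fin (m a), A x y = A y x := by
    intro x y
    rw [hA, hA, min_comm]
    rcases eq_or_ne x y with rfl | hne
    · rfl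
    · rw [if_neg hne, if_neg (Ne.symm hne)]
      congr 1
      exact if_congr eq_comm rfl rfl
  have hAT : A.transpose = A := by
    ext x y; exact hAs y x
  -- block constancy of v
  have hvconst : ∀ (a : Fin s) (α α' : Fin (m a)), v ⟨a, α⟩ = v ⟨a, α'⟩ := by
    intro a α α'
    rcases eq_or_ne α α' with rfl | hαα'
    · rfl
    have hxne : (⟨a, α⟩ : (a : Fin s) × Fin (m a)) ≠ ⟨a, α'⟩ := by
      intro hh
      exact hαα' (by simpa using hh)
    by_cases hcc : (p a : ℚ) + (m a : ℚ) = 0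
    · -- two equal rows, contradicting invertibility
      exfalso
      have hrow : A ⟨a, α⟩ = A ⟨a, α'⟩ := by
        funext y
        rw [hA, hA]
        simp [hcc]
      have hd0 : A.det = 0 := Matrix.det_zero_of_row_eq hxne hrow
      rw [hd0] at hAdet
      exact (by simpa using hAdet : False)
    · -- subtract the two rows of A·v = h
      have e1 := congrFun hAv ⟨a, α⟩
      have e2 := congrFun hAv ⟨a, α'⟩
      have hdiff : ∀ y : (a : Fin s) × Fin (m a), A ⟨a, α⟩ y - A ⟨a, α'⟩ y =
          (if (⟨a, α⟩ : (a : Fin s) × Fin (m a)) = y then (p a : ℚ) + (m a : ℚ) else 0)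
            - (if (⟨a, α'⟩ : (a : Fin s) × Fin (m a)) = y then (p a : ℚ) + (m a : ℚ) else 0) := by
        intro y
        rw [hA, hA]
        ring
      have hsum : ∑ y, (A ⟨a, α⟩ y - A ⟨a, α'⟩ y) * v y =
          ((p a : ℚ) + (m a : ℚ)) * v ⟨a, α⟩ - ((p a : ℚ) + (m a : ℚ)) * v ⟨a, α'⟩ := by
        rw [Finset.sum_congr rfl (fun y _ => by rw [hdiff y, sub_mul])]
        rw [Finset.sum_sub_distrib]
        congr 1
        · rw [Finset.sum_eq_single (⟨a, α⟩ : (a : Fin s) × Fin (m a))] <;> simp +contextual [eq_comm]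
        · rw [Finset.sum_eq_single (⟨a, α'⟩ : (a : Fin s) × Fin (m a))] <;> simp +contextual [eq_comm]
      have hL0 : ∑ y, (A ⟨a, α⟩ y - A ⟨a, α'⟩ y) * v y = 0 := by
        have : ∑ y, (A ⟨a, α⟩ y - A ⟨a, α'⟩ y) * v y =
            (∑ y, A ⟨a, α⟩ y * v y) - ∑ y, A ⟨a, α'⟩ y * v y := by
          rw [← Finset.sum_sub_distrib]
          exact Finset.sum_congr rfl (fun y _ => by ring)
        rw [this]
        have e1' : ∑ y, A ⟨a, α⟩ y * v y = hq ⟨a, α⟩ := e1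
        have e2' : ∑ y, A ⟨a, α'⟩ y * v y = hq ⟨a, α'⟩ := e2
        rw [e1', e2']
        simp [hhq]
      rw [hsum] at hL0
      have := sub_eq_zero.mp hL0
      exact mul_left_cancel₀ hcc this
  -- column sums of A are all L
  have hcol : ∀ y : (a : Fin s) × Fin (m a), (∑ x, A x y) = (L : ℚ) := by
    intro y
    rw [Finset.sum_congr rfl (fun x _ => hA x y)]
    have t1 : ∑ x : (a : Fin s) × Fin (m a),
        (if x = y then (p x.1 : ℚ) + (m x.1 : ℚ) else 0) = (p y.1 : ℚ) + (m y.1 : ℚ) := by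
      rw [Finset.sum_eq_single y] <;> simp +contextual
    have t2 : ∑ x : (a : Fin s) × Fin (m a), 2 * (min (j x.1) (j y.1) : ℚ)
        = ∑ a, (m a : ℚ) * (2 * (min (j a) (j y.1) : ℚ)) := by
      rw [← Finset.univ_sigma_univ, Finset.sum_sigma]
      exact Finset.sum_congr rfl (fun a _ => by
        simp [Finset.sum_const, Finset.card_univ, nsmul_eq_mul])
    have t3 : ∑ x : (a : Fin s) × Fin (m a),
        (if x.1 = y.1 then (1 : ℚ) else 0) = (m y.1 : ℚ) := by
      rw [← Finset.univ_sigma_univ, Finset.sum_sigma]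
      rw [Finset.sum_eq_single y.1]
      · simp
      · intro a _ ha; simp [ha]
      · simp
    simp only [Finset.sum_sub_distrib, Finset.sum_add_distrib, t1, t2, t3]
    have hpy : (p y.1 : ℚ) = (L : ℚ) - 2 * ∑ b, (min (j y.1) (j b) : ℚ) * (m b : ℚ) := by
      have := hp y.1
      push_cast [this]
      ring
    rw [hpy]
    have hswap : ∑ b, (min (j y.1) (j b) : ℚ) * (m b : ℚ)
        = ∑ a, (m a : ℚ) * (min (j a) (j y.1) : ℚ) := by
      exact Finset.sum_congr rfl (fun b _ => by rw [min_comm, mul_comm])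
    rw [hswap]
    rw [Finset.sum_congr rfl (fun a (_ : a ∈ Finset.univ) =>
      (by ring : (m a : ℚ) * (2 * (min (j a) (j y.1) : ℚ))
        = 2 * ((m a : ℚ) * (min (j a) (j y.1) : ℚ))))]
    rw [← Finset.mul_sum]
    ring
  -- N * Σ h = L * Σ z
  have hNsum : (N : ℚ) * ∑ x, hq x = (L : ℚ) * ∑ x, (z x : ℚ) := by
    have step : ∀ x, (N : ℚ) * hq x = ∑ y, A x y * (z y : ℚ) := by
      intro x
      rw [← congrFun hAv x]
      show (N : ℚ) * ∑ y, A x y * v y = _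
      rw [Finset.mul_sum]
      exact Finset.sum_congr rfl (fun y _ => by rw [mul_left_comm, hz y])
    rw [Finset.mul_sum, Finset.sum_congr rfl (fun x _ => step x), Finset.sum_comm]
    rw [Finset.mul_sum]
    exact Finset.sum_congr rfl (fun y _ => by rw [← Finset.sum_mul, hcol y])
  -- the real matrix
  set Ar : Matrix ((a : Fin s) × Fin (m a)) ((a : Fin s) × Fin (m a)) ℝ :=
    A.map (Rat.cast : ℚ → ℝ) with hAr
  have hArdet : IsUnit Ar.det := by
    have h1 : Ar.det = ((A.det : ℚ) : ℝ) := (RingHom.map_det (Rat.castHom ℝ) A).symm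
    rw [h1]
    exact isUnit_iff_ne_zero.mpr (by exact_mod_cast hAdet.ne_zero)
  set d : ((a : Fin s) × Fin (m a)) → ℝ :=
    fun x => ((p x.1 : ℝ) + (m x.1 : ℝ) + 1) / 2 + (Iv x : ℝ) with hd
  have hAru : Ar.mulVec u = d := by
    funext x
    simpa [Matrix.mulVec, dotProduct, hAr, Matrix.map_apply, hd] using hu x
  have huv : u = Ar⁻¹.mulVec d := by
    rw [← hAru, Matrix.mulVec_mulVec, Matrix.nonsing_inv_mul _ hArdet, Matrix.one_mulVec]
  have hArinv : Ar⁻¹ = A⁻¹.map (Rat.cast : ℚ → ℝ) := by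
    apply Matrix.inv_eq_right_inv
    have : Ar * A⁻¹.map (Rat.cast : ℚ → ℝ)
        = (A * A⁻¹).map (Rat.castHom ℝ) := (Matrix.map_mul (f := Rat.castHom ℝ)).symm
    rw [this, Matrix.mul_nonsing_inv _ hAdet]
    ext x y
    simp [Matrix.map_apply, Matrix.one_apply, apply_ite]
  have hArT : Ar.transpose = Ar := by
    ext x y
    simp only [Matrix.transpose_apply, hAr, Matrix.map_apply]
    rw [hAs y x]
  have hArinvT : Ar⁻¹.transpose = Ar⁻¹ := by
    rw [Matrix.transpose_nonsing_inv, hArT]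
  set hr : ((a : Fin s) × Fin (m a)) → ℝ := fun x => (min (j x.1) l : ℝ) with hhr
  have hvr : Ar⁻¹.mulVec hr = fun x => (v x : ℝ) := by
    rw [hArinv]
    funext x
    rw [hv]
    show ∑ y, ((A⁻¹ x y : ℚ) : ℝ) * hr y = ((∑ y, A⁻¹ x y * hq y : ℚ) : ℝ)
    push_cast [hhr, hhq]
    rfl
  -- the key dot-product identity
  have hdot : ∑ x, hr x * u x = ∑ x, (v x : ℝ) * d x := by
    have h1 : ∑ x, hr x * u x = dotProduct hr (Ar⁻¹.mulVec d) := by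
      rw [← huv]; rfl
    rw [h1, Matrix.dotProduct_mulVec]
    have h2 : Matrix.vecMul hr Ar⁻¹ = fun x => (v x : ℝ) := by
      rw [← hArinvT, Matrix.vecMul_transpose, hvr]
    rw [h2]
    rfl
  -- parity of m(p+m+1+L)
  have heven : ∀ a : Fin s, ∃ g : ℤ, (m a : ℤ) * (p a + (m a : ℤ) + 1 + (L : ℤ)) = 2 * g := by
    intro a
    have h2 : Even ((m a : ℤ) * (p a + (m a : ℤ) + 1 + (L : ℤ))) := by
      have hsplit : (m a : ℤ) * (p a + (m a : ℤ) + 1 + (L : ℤ))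
          = (m a : ℤ) * (p a + (L : ℤ)) + (m a : ℤ) * ((m a : ℤ) + 1) := by ring
      rw [hsplit]
      refine Even.add (Even.mul_left ?_ _) (Int.even_mul_succ_self (m a))
      exact ⟨(L : ℤ) - 2 * ∑ b, (min (j a) (j b) : ℤ) * (m b : ℤ)
        + ∑ b, (min (j a) (j b) : ℤ) * (m b : ℤ), by rw [hp a]; ring⟩
    obtain ⟨g, hg⟩ := h2
    exact ⟨g, by omega⟩
  choose g hg using heven
  -- block constancy of z
  set z0 : Fin s → ℤ := fun a => z ⟨a, ⟨0, hm a⟩⟩ with hz0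
  have hzconst : ∀ (a : Fin s) (α : Fin (m a)), z ⟨a, α⟩ = z0 a := by
    intro a α
    have : ((z ⟨a, α⟩ : ℤ) : ℚ) = ((z0 a : ℤ) : ℚ) := by
      rw [← hz ⟨a, α⟩, hz0, ← hz ⟨a, ⟨0, hm a⟩⟩, hvconst a α ⟨0, hm a⟩]
    exact_mod_cast this
  -- the integer T
  set T : ℤ := (∑ a, z0 a * g a) + ∑ x, z x * Iv x with hT
  -- the main real computation
  set S : ℝ := ∑ x, hr x * (u x + 1 / 2) with hS
  have hNS : (N : ℝ) * S = (T : ℝ) := by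
    have e0 : (N : ℝ) * S = (N : ℝ) * ∑ x, hr x * u x + ((N : ℝ) * ∑ x, hr x) / 2 := by
      rw [hS]
      rw [Finset.sum_congr rfl (fun x (_ : x ∈ Finset.univ) =>
        (by ring : hr x * (u x + 1 / 2) = hr x * u x + hr x / 2))]
      rw [Finset.sum_add_distrib, ← Finset.sum_div]
      ring
    have e1 : (N : ℝ) * ∑ x, hr x * u x = ∑ x, (z x : ℝ) * d x := by
      rw [hdot, Finset.mul_sum]
      refine Finset.sum_congr rfl (fun x _ => ?_)
      have : ((N : ℚ) * v x : ℚ) = ((z x : ℤ) : ℚ) := hz x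
      have hzr : (N : ℝ) * ((v x : ℚ) : ℝ) = ((z x : ℤ) : ℝ) := by exact_mod_cast this
      rw [← mul_assoc, hzr]
    have e2 : (N : ℝ) * ∑ x, hr x = (L : ℝ) * ∑ x, ((z x : ℤ) : ℝ) := by
      have := hNsum
      have hcast : ((N : ℚ) * ∑ x, hq x : ℚ) = (((L : ℚ) * ∑ x, (z x : ℚ)) : ℚ) := this
      have : (((N : ℚ) * ∑ x, hq x : ℚ) : ℝ) = ((((L : ℚ) * ∑ x, (z x : ℚ)) : ℚ) : ℝ) := by
        exact_mod_cast congrArg (Rat.cast : ℚ → ℝ) hcast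
      push_cast at this
      convert this using 2
      · rw [hhr, hhq]; push_cast; rfl
    rw [e0, e1, e2]
    -- now pure algebra with z
    have e3 : ∑ x, (z x : ℝ) * d x
        = ∑ x, (z x : ℝ) * (((p x.1 : ℝ) + (m x.1 : ℝ) + 1) / 2)
          + ∑ x, (z x : ℝ) * (Iv x : ℝ) := by
      rw [← Finset.sum_add_distrib]
      exact Finset.sum_congr rfl (fun x _ => by rw [hd]; ring)
    rw [e3]
    have e4 : ∑ x, (z x : ℝ) * (((p x.1 : ℝ) + (m x.1 : ℝ) + 1) / 2)
          + ((L : ℝ) * ∑ x, ((z x : ℤ) : ℝ)) / 2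
        = ∑ x : (a : Fin s) × Fin (m a),
            (z x : ℝ) * (((p x.1 : ℝ) + (m x.1 : ℝ) + 1 + (L : ℝ)) / 2) := by
      rw [Finset.mul_sum, Finset.sum_div, ← Finset.sum_add_distrib]
      exact Finset.sum_congr rfl (fun x _ => by ring)
    rw [add_right_comm, e4, hT]
    push_cast
    congr 1
    rw [← Finset.univ_sigma_univ, Finset.sum_sigma]
    refine Finset.sum_congr rfl (fun a _ => ?_)
    have hconst : ∀ α : Fin (m a),
        ((z ⟨a, α⟩ : ℤ) : ℝ) * (((p a : ℝ) + (m a : ℝ) + 1 + (L : ℝ)) / 2)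
        = ((z0 a : ℤ) : ℝ) * (((p a : ℝ) + (m a : ℝ) + 1 + (L : ℝ)) / 2) := by
      intro α; rw [hzconst a α]
    rw [Finset.sum_congr rfl (fun α _ => hconst α), Finset.sum_const, Finset.card_univ,
      Fintype.card_fin, nsmul_eq_mul]
    have hga : ((m a : ℤ) : ℝ) * ((p a : ℝ) + (m a : ℝ) + 1 + (L : ℝ)) = 2 * ((g a : ℤ) : ℝ) := by
      exact_mod_cast congrArg (Int.cast : ℤ → ℝ) (hg a)
    push_cast at hga ⊢
    linear_combination ((z0 a : ℝ)) / 2 * hga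
  -- conclude
  have hSc : (∑ x : (a : Fin s) × Fin (m a),
      ((min (j x.1) l : ℕ) : ℂ) * ((u x : ℂ) + 1 / 2)) = ((S : ℝ) : ℂ) := by
    rw [hS, hhr]
    push_cast
    exact Finset.sum_congr rfl (fun x _ => by norm_cast)
  rw [hSc, ← Complex.exp_nat_mul]
  have hfin : (N : ℂ) * (2 * (Real.pi : ℂ) * Complex.I * ((S : ℝ) : ℂ))
      = (T : ℤ) * (2 * (Real.pi : ℂ) * Complex.I) := by
    have hNSc : (N : ℂ) * ((S : ℝ) : ℂ) = ((T : ℤ) : ℂ) := by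
      exact_mod_cast congrArg (Complex.ofReal : ℝ → ℂ) hNS
    calc (N : ℂ) * (2 * (Real.pi : ℂ) * Complex.I * ((S : ℝ) : ℂ))
        = ((N : ℂ) * ((S : ℝ) : ℂ)) * (2 * (Real.pi : ℂ) * Complex.I) := by ring
      _ = ((T : ℤ) : ℂ) * (2 * (Real.pi : ℂ) * Complex.I) := by rw [hNSc]
  rw [hfin]
  exact Complex.exp_int_mul_two_pi_mul_I T
end

section
/- For any path p in the periodic box-ball system B₁^{⊗L}, the inverse of the time evolution T_l satisfies T_l^{-1}(p) = ϱ(T_l(ϱ(p))), where ϱ reverses the order of tensor factors. -/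
/-- Passing the carrier `v` through the path `p` from the left, via the
combinatorial `R`: returns the output path and the outgoing carrier. -/
def pass : (ℤ × ℤ) → List (ℤ × ℤ) → List (ℤ × ℤ) × (ℤ × ℤ)
  | v, [] => ([], v)
  | v, b :: t =>
    let w := Rmap v b
    let rest := pass w.2 t
    (w.1 :: rest.1, rest.2)

/-- The combinatorial `R` is an involution (ϱ∘R∘ϱ = R⁻¹). -/
lemma Rmap_invol (x y : ℤ × ℤ) :
    Rmap (Rmap x y).2 (Rmap x y).1 = (y, x) := by
  simp only [Rmap, Q0, Q1]
  obtain ⟨x1, x2⟩ := x; obtain ⟨y1, y2⟩ := y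
  simp only [Prod.mk.injEq]
  constructor <;> constructor <;>
    rcases le_total x2 y1 with h1 | h1 <;>
    rcases le_total x1 y2 with h2 | h2 <;>
      simp_all [min_eq_left, min_eq_right] <;> omega

lemma pass_append (v : ℤ × ℤ) (s : List (ℤ × ℤ)) (b : ℤ × ℤ) :
    pass v (s ++ [b]) =
      ((pass v s).1 ++ [(Rmap (pass v s).2 b).1], (Rmap (pass v s).2 b).2) := by
  induction s generalizing v with
  | nil => simp [_root_.pass]
  | cons a t ih => simp [_root_.pass, ih]

lemma pass_reverse (v : ℤ × ℤ) (s t : List (ℤ × ℤ)) (w : ℤ × ℤ)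
    (h : pass v s = (t, w)) : pass w t.reverse = (s.reverse, v) := by
  induction s generalizing v t with
  | nil =>
    simp [_root_.pass] at h
    simp [_root_.pass, h.1, h.2]
  | cons a r ih =>
    simp only [_root_.pass] at h
    have h2 : pass (Rmap v a).2 r = ((pass (Rmap v a).2 r).1, w) := by
      rw [Prod.mk.injEq] at h
      exact (Prod.ext_iff.2 ⟨rfl, by rw [← h.2]⟩)
    have ht : t = (Rmap v a).1 :: (pass (Rmap v a).2 r).1 := by
      rw [Prod.mk.injEq] at h; exact h.1.symm
    have := ih _ _ h2
    subst ht
    simp only [List.reverse_cons, pass_append, this, Rmap_invol]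

/-- `T_l⁻¹(p) = ϱ(T_l(ϱ(p)))`, where `ϱ` reverses the tensor factors.
Equivalently: if `T_l(ϱ(p)) = q` (witnessed by a returning carrier
`v ∈ B_l`), then `T_l(ϱ(q)) = p` (witnessed by some returning carrier
`w ∈ B_l`). -/
theorem stmt15 (l : ℤ) (hl : 1 ≤ l) (p : List (ℤ × ℤ))
    (hp : ∀ b ∈ p, memB 1 b) (v : ℤ × ℤ) (hv : memB l v)
    (q : List (ℤ × ℤ)) (hq : pass v p.reverse = (q, v)) :
    ∃ w : ℤ × ℤ, memB l w ∧ pass w q.reverse = (p, w) := by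
  refine ⟨v, hv, ?_⟩
  have := pass_reverse v p.reverse q v hq
  simpa using this
end

section
/- Fix m ∈ M with support H and vacancy numbers p_j, and suppose J ∈ J̄(m). If N is a positive integer such that there exist integers r_a (a = 1,…,s) satisfying p_{j_k}·r_k + 2Σ_{a=1}^s min(j_k, j_a)·m_{j_a}·r_a = N·min(j_k, l) for all k, then σ_{j₁}^{m_{j₁}r₁} ∘ ⋯ ∘ σ_{j_s}^{m_{j_s}r_s}(J) = J + N·min(·, l) componentwise, i.e. the N-th power of the linear time evolution T_l on J̄(m) (which adds min(j,l) to each entry of the j-block) agrees on J with a slide; hence [T_l^N(J)] = [J] in J(m) = J̄(m)/≃. -/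
/-- The power `σ_k^t` (`t ∈ ℤ`) of the slide `σ_k`:
`(σ_k^t J)^{(j)}_i = J^{(j)}_{i + t·δ_{j,k}} + 2 min(j,k)·t`. -/
def slideZ (k : ℕ) (t : ℤ) (J : ℕ → ℤ → ℤ) : ℕ → ℤ → ℤ :=
  fun j i => J j (i + (if j = k then t else 0)) + 2 * (min j k : ℤ) * t

/-! The composite of the slides shifts the index of the `j`-block by `m_j r_j` (only `σ_j`
moves it) while adding `2 Σ_a min(j, j_a) m_{j_a} r_a` to it. By quasi-periodicity the
shift adds `p_j r_j`, so in total the block gains `N min(j, l)` by the linear system. -/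

theorem apply_add_mul_of_apply_add {G : Type*} [AddCommGroup G] {f : ℤ → G} {d : ℤ} {p : G}
    (hf : ∀ i, f (i + d) = f i + p) (i t : ℤ) : f (i + d * t) = f i + t • p := by
  have hperiodic : Function.Periodic (fun t : ℤ => f (i + d * t) - t • p) 1 := fun t => by
    simp only [mul_add, mul_one, ← add_assoc, hf, add_smul, one_smul]
    abel
  have := hperiodic.int_mul_eq t
  simp only [Int.cast_id, mul_one, mul_zero, add_zero, zero_smul, sub_zero] at this
  rw [← this]
  abel

theorem foldr_slideZ_apply (t : ℕ → ℤ) (ks : List ℕ) (J : ℕ → ℤ → ℤ) (j : ℕ) (i : ℤ) :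
    ks.foldr (fun k F => slideZ k (t k) ∘ F) id J j i
      = J j (i + (ks.map fun k => if j = k then t k else 0).sum)
        + (ks.map fun k : ℕ => 2 * (min j k : ℤ) * t k).sum := by
  induction ks generalizing i with
  | nil => simp
  | cons k ks ih =>
    simp only [List.foldr_cons, Function.comp_apply, slideZ, List.map_cons, List.sum_cons, ih,
      add_assoc i]
    ring

theorem foldr_sort_slideZ_apply (t : ℕ → ℤ) (s : Finset ℕ) (J : ℕ → ℤ → ℤ) {j : ℕ}
    (hj : j ∈ s) (i : ℤ) :
    (s.sort (· ≤ ·)).foldr (fun k F => slideZ k (t k) ∘ F) id J j i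
      = J j (i + t j) + ∑ k ∈ s, 2 * (min j k : ℤ) * t k := by
  have hsum (g : ℕ → ℤ) : ((s.sort (· ≤ ·)).map g).sum = ∑ k ∈ s, g k := by
    rw [← List.sum_toFinset g (s.sort_nodup _), Finset.sort_toFinset]
  rw [foldr_slideZ_apply, hsum, hsum, Finset.sum_ite_eq, if_pos hj]

theorem stmt19_general (L : ℕ) (m : ℕ →₀ ℕ)
    (l : ℕ)
    (J : ℕ → ℤ → ℤ) (hJ : InJbar L m J)
    (N : ℕ) (r : ℕ → ℤ)
    (hr : ∀ k ∈ m.support,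
      vacancy L m k * r k + 2 * ∑ a ∈ m.support, (min k a : ℤ) * (m a : ℤ) * r a
        = (N : ℤ) * (min k l : ℤ)) :
    ∀ j ∈ m.support, ∀ i : ℤ,
      (((m.support.sort (· ≤ ·)).foldr
          (fun k F => slideZ k ((m k : ℤ) * r k) ∘ F) id) J) j i
        = J j i + (N : ℤ) * (min j l : ℤ) := by
  intro j hj i
  rw [foldr_sort_slideZ_apply _ _ _ hj, apply_add_mul_of_apply_add (hJ j hj).2, smul_eq_mul,
    ← hr j hj, Finset.mul_sum, add_assoc, mul_comm (r j)]
  congr 2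
  exact Finset.sum_congr rfl fun k _ => by ring

/-- If integers `r_a` solve `p_{j_k} r_k + 2 Σ_a min(j_k,j_a) m_{j_a} r_a =
N min(j_k,l)` for all `k`, then the slide `σ_{j₁}^{m_{j₁}r₁} ⋯ σ_{j_s}^{m_{j_s}r_s}`
applied to `J ∈ J̄(m)` adds `N·min(j,l)` to every entry of the `j`-block, i.e.
it agrees on `J` with `T_l^N`; hence `[T_l^N(J)] = [J]` in `J(m) = J̄(m)/≃`. -/
theorem stmt19 (L : ℕ) (hL : 0 < L) (m : ℕ →₀ ℕ) (h0 : m 0 = 0)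
    (hm : 2 * ∑ j ∈ m.support, j * m j ≤ L)
    (l : ℕ) (hl : 1 ≤ l)
    (J : ℕ → ℤ → ℤ) (hJ : InJbar L m J)
    (N : ℕ) (hN : 0 < N) (r : ℕ → ℤ)
    (hr : ∀ k ∈ m.support,
      vacancy L m k * r k + 2 * ∑ a ∈ m.support, (min k a : ℤ) * (m a : ℤ) * r a
        = (N : ℤ) * (min k l : ℤ)) :
    ∀ j ∈ m.support, ∀ i : ℤ,
      (((m.support.sort (· ≤ ·)).foldr
          (fun k F => slideZ k ((m k : ℤ) * r k) ∘ F) id) J) j i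
        = J j i + (N : ℤ) * (min j l : ℤ) :=
  stmt19_general L m l J hJ N r hr
end
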